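/- arXiv:1510.02324 — 9 statements merged into one kernel-verified Lean document; each statement's English description precedes it below -/
import Mathlib

section
/- Let G be a (banner, C5)-free graph containing an odd antihole A such that (i) the stability number of G is at least 3, and (ii) no co-triangle of G contains two vertices of A. Then the complement of G contains a triangle-free connected component O that contains all of A. -/
open SimpleGraph

/-- The banner: a chordless 4-cycle 0-1-2-3-0 together with a fifth vertex 4
adjacent to exactly one vertex (vertex 0) of the cycle. -/
def banner : SimpleGraph (Fin 5) :=
  SimpleGraph.fromRel (fun i j =>
    (i = 0 ∧ j = 1) ∨ (i = 1 ∧ j = 2) ∨ (i = 2 ∧ j = 3) ∨ (i = 3 ∧ j = 0) ∨ (i = 0 ∧ j = 4))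

/-- A graph is banner-free if it has no induced subgraph isomorphic to the banner. -/
def BannerFree {V : Type*} (G : SimpleGraph V) : Prop := ¬ Nonempty (banner ↪g G)

/-- A graph is C5-free if it has no induced subgraph isomorphic to the chordless 5-cycle. -/
def C5Free {V : Type*} (G : SimpleGraph V) : Prop :=
  ¬ Nonempty (SimpleGraph.cycleGraph 5 ↪g G)

/-- A graph is odd-hole-free if it has no induced chordless cycle of odd length `n ≥ 5`
(odd holes are the odd chordless cycles with at least four, hence at least five, vertices). -/
def OddHoleFree {V : Type*} (G : SimpleGraph V) : Prop :=
  ∀ n : ℕ, 5 ≤ n → Odd n → ¬ Nonempty (SimpleGraph.cycleGraph n ↪g G)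

/-- `A` is an odd antihole of `G`: the subgraph induced by `A` is isomorphic to the
complement of a chordless cycle on an odd number `n ≥ 5` of vertices. -/
def IsOddAntihole {V : Type*} (G : SimpleGraph V) (A : Set V) : Prop :=
  ∃ n : ℕ, 5 ≤ n ∧ Odd n ∧ Nonempty ((SimpleGraph.cycleGraph n)ᶜ ≃g G.induce A)

/-- `H` is a homogeneous set of `G`: `2 ≤ |H| < |V(G)|` and every vertex outside `H`
is adjacent to all vertices of `H` or to none of them. -/
def IsHomogeneous {V : Type*} (G : SimpleGraph V) (H : Set V) : Prop :=
  2 ≤ H.ncard ∧ H ≠ Set.univ ∧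
    ∀ v ∉ H, (∀ h ∈ H, G.Adj v h) ∨ (∀ h ∈ H, ¬ G.Adj v h)

/-- A graph is perfect if every induced subgraph has chromatic number equal to
its clique number. -/
def IsPerfect {V : Type*} (G : SimpleGraph V) : Prop :=
  ∀ S : Set V, (G.induce S).chromaticNumber = ((G.induce S).cliqueNum : ℕ∞)

/-- A graph is perfectly divisible if every induced subgraph `G[S]` contains a set `X`
of vertices meeting all largest cliques of `G[S]` and inducing a perfect graph. -/
def PerfectlyDivisible {V : Type*} (G : SimpleGraph V) : Prop :=
  ∀ S : Set V, ∃ X ⊆ S, IsPerfect (G.induce X) ∧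
    ∀ t : Finset V, ↑t ⊆ S → G.IsNClique ((G.induce S).cliqueNum) t → ∃ x ∈ X, x ∈ t

/-- A graph is `k`-divisible if the vertex set of each of its induced subgraphs `G[S]`
having at least one edge can be partitioned into `k` sets, none of which contains a
clique of size `ω(G[S])`.  (A graph with no edges is trivially `k`-divisible.) -/
def KDivisible {V : Type*} (G : SimpleGraph V) (k : ℕ) : Prop :=
  ∀ S : Set V, (∃ a ∈ S, ∃ b ∈ S, G.Adj a b) →
    ∃ P : Fin k → Set V, (∀ v ∈ S, ∃! i, v ∈ P i) ∧
      ∀ i, P i ⊆ S ∧ ¬ ∃ t : Finset V, ↑t ⊆ P i ∧ G.IsNClique ((G.induce S).cliqueNum) t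

/-- The maximum total weight `α_w(G)` of a stable (independent) set of the weighted
graph `G`; stable sets of `G` are exactly the cliques of the complement of `G`. -/
noncomputable def alphaW {V : Type*} (G : SimpleGraph V) (w : V → ℤ) : ℤ :=
  sSup {x : ℤ | ∃ s : Finset V, Gᶜ.IsClique (↑s : Set V) ∧ x = ∑ v ∈ s, w v}

/-- `C` is a clique cutset of the connected graph `G` if `C` is a clique and
deleting `C` from `G` leaves a disconnected graph. -/
def IsCliqueCutset {V : Type*} (G : SimpleGraph V) (C : Set V) : Prop :=
  G.Connected ∧ G.IsClique C ∧ ¬ (G.induce Cᶜ).Preconnected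

/-!
In `Gᶜ` the antihole is an odd hole, so it lies in a single component. Since no co-triangle
meets `A` twice, a vertex outside `A` is adjacent to one of any two consecutive antihole
vertices. Banner- and `C5`-freeness then show that two non-adjacent vertices outside `A`
have no common non-neighbour in `A`, and that no co-triangle outside `A` has a non-neighbour
in `A`: in both cases the non-neighbourhoods would propagate around the odd cycle in steps of
two and eventually contain two consecutive vertices. Finally, banner-freeness makes the set of
vertices within distance one of a triangle of `Gᶜ` closed under `Gᶜ`-adjacency, so a triangle
in the component of `A` would come within distance one of `A`.
-/

open scoped Fin.NatCast Fin.CommRing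

theorem Fin.forall_of_imp_add {n : ℕ} [NeZero n] {P : Fin n → Prop} {s : Fin n} {t : ℕ}
    (hst : (t : Fin n) * s = 1) (h : ∀ i, P i → P (i + s)) {i : Fin n} (hi : P i)
    (j : Fin n) : P j := by
  have key : ∀ k : ℕ, P (i + k * s) := by
    intro k
    induction k with
    | zero => simpa using hi
    | succ k ih => simpa [add_mul, add_assoc] using h _ ih
  have := key ((j - i).val * t)
  rwa [Nat.cast_mul, mul_assoc, hst, mul_one, Fin.cast_val_eq_self, add_sub_cancel] at this

theorem Fin.forall_of_imp_add_one {n : ℕ} [NeZero n] {P : Fin n → Prop}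
    (h : ∀ i, P i → P (i + 1)) {i : Fin n} (hi : P i) (j : Fin n) : P j :=
  Fin.forall_of_imp_add (t := 1) (by simp) h hi j

theorem Fin.forall_of_imp_add_two {n : ℕ} [NeZero n] (hn : Odd n) {P : Fin n → Prop}
    (h : ∀ i, P i → P (i + 2)) {i : Fin n} (hi : P i) (j : Fin n) : P j := by
  obtain ⟨m, rfl⟩ := hn
  refine Fin.forall_of_imp_add (t := m + 1) ?_ h hi j
  rw [show (2 : Fin (2 * m + 1)) = ((2 : ℕ) : Fin (2 * m + 1)) by norm_cast, ← Nat.cast_mul,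
    show (m + 1) * 2 = (2 * m + 1) + 1 by ring, Nat.cast_add, Fin.natCast_self, zero_add,
    Nat.cast_one]

section Graph

variable {V W : Type*} {G : SimpleGraph V}

theorem SimpleGraph.adj_of_not_compl_adj {u v : V} (h : ¬Gᶜ.Adj u v) (huv : u ≠ v) :
    G.Adj u v :=
  not_not.mp fun h' => h ⟨huv, h'⟩

theorem SimpleGraph.adj_of_not_compl_adj_of_notMem_range {f : W → V} {v : V}
    (hv : v ∉ Set.range f) {i : W} (h : ¬Gᶜ.Adj v (f i)) : G.Adj v (f i) :=
  adj_of_not_compl_adj h (ne_of_mem_of_not_mem (Set.mem_range_self i) hv).symm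

theorem SimpleGraph.nonempty_embedding_of_adj_of_compl_adj {H : SimpleGraph W} (φ : W → V)
    (hadj : ∀ i j, H.Adj i j → G.Adj (φ i) (φ j))
    (hnadj : ∀ i j, i ≠ j → ¬H.Adj i j → Gᶜ.Adj (φ i) (φ j)) : Nonempty (H ↪g G) := by
  refine ⟨⟨⟨φ, fun i j hij => ?_⟩, fun {i j} => ⟨fun h => ?_, hadj i j⟩⟩⟩
  · by_contra hne
    by_cases h : H.Adj i j
    · exact (hadj i j h).ne hij
    · exact (hnadj i j hne h).ne hij
  · by_contra hH
    exact (hnadj i j (fun hij => h.ne (congrArg φ hij)) hH).2 h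

instance : DecidableRel banner.Adj :=
  fun a b => decidable_of_iff' _ (fromRel_adj _ a b)

theorem BannerFree.elim (hG : BannerFree G) {v₀ v₁ v₂ v₃ v₄ : V}
    (h01 : G.Adj v₀ v₁) (h12 : G.Adj v₁ v₂) (h23 : G.Adj v₂ v₃) (h30 : G.Adj v₃ v₀)
    (h04 : G.Adj v₀ v₄) (n02 : Gᶜ.Adj v₀ v₂) (n13 : Gᶜ.Adj v₁ v₃) (n14 : Gᶜ.Adj v₁ v₄)
    (n24 : Gᶜ.Adj v₂ v₄) (n34 : Gᶜ.Adj v₃ v₄) : False := by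
  refine hG (nonempty_embedding_of_adj_of_compl_adj ![v₀, v₁, v₂, v₃, v₄] (fun i j h => ?_)
    (fun i j hij h => ?_))
  · fin_cases i <;> fin_cases j <;>
      first | exact absurd h (by decide) | assumption | exact Adj.symm (by assumption)
  · fin_cases i <;> fin_cases j <;>
      first | exact absurd rfl hij | exact absurd (by decide) h | assumption |
        exact Adj.symm (by assumption)

theorem C5Free.elim (hG : C5Free G) {v₀ v₁ v₂ v₃ v₄ : V}
    (h01 : G.Adj v₀ v₁) (h12 : G.Adj v₁ v₂) (h23 : G.Adj v₂ v₃) (h34 : G.Adj v₃ v₄)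
    (h40 : G.Adj v₄ v₀) (n02 : Gᶜ.Adj v₀ v₂) (n03 : Gᶜ.Adj v₀ v₃) (n13 : Gᶜ.Adj v₁ v₃)
    (n14 : Gᶜ.Adj v₁ v₄) (n24 : Gᶜ.Adj v₂ v₄) : False := by
  refine hG (nonempty_embedding_of_adj_of_compl_adj ![v₀, v₁, v₂, v₃, v₄] (fun i j h => ?_)
    (fun i j hij h => ?_))
  · fin_cases i <;> fin_cases j <;>
      first | exact absurd h (by decide) | assumption | exact Adj.symm (by assumption)
  · fin_cases i <;> fin_cases j <;>
      first | exact absurd rfl hij | exact absurd (by decide) h | assumption |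
        exact Adj.symm (by assumption)

end Graph

def NoCoTriangleMeetsTwice {V : Type*} (G : SimpleGraph V) (A : Set V) : Prop :=
  ∀ ⦃x y z⦄, x ∈ A → y ∈ A → Gᶜ.Adj x y → Gᶜ.Adj x z → Gᶜ.Adj y z → False

section Antihole

variable {V : Type*} {G : SimpleGraph V} {n : ℕ} [NeZero n] (f : (cycleGraph n)ᶜ ↪g G)

theorem antihole_compl_adj (hn : 2 ≤ n) {i j : Fin n} (h : j = i + 1) : Gᶜ.Adj (f i) (f j) := by
  subst h
  have hval : (1 : Fin n).val = 1 := by rw [Fin.val_one', Nat.mod_eq_of_lt (by omega)]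
  refine ⟨f.injective.ne fun h => ?_, ?_⟩
  · have := congrArg Fin.val (left_eq_add.mp h)
    rw [hval, Fin.val_zero] at this
    omega
  · rw [f.map_adj_iff, compl_adj, cycleGraph_adj', add_sub_cancel_left, hval]
    tauto

theorem antihole_adj {k : ℕ} (hk : 2 ≤ k) (hkn : k + 2 ≤ n) {i j : Fin n} (h : j = i + k) :
    G.Adj (f i) (f j) := by
  subst h
  have hval : ((k : ℕ) : Fin n).val = k := Nat.mod_eq_of_lt (by omega)
  rw [f.map_adj_iff, compl_adj, cycleGraph_adj', sub_add_cancel_left, add_sub_cancel_left,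
    Fin.val_neg', hval]
  refine ⟨fun h => ?_, ?_⟩
  · have := congrArg Fin.val (left_eq_add.mp h)
    rw [hval, Fin.val_zero] at this
    omega
  · rw [Nat.mod_eq_of_lt (by omega)]
    omega

theorem antihole_adj_two (hn : 4 ≤ n) {i j : Fin n} (h : j = i + 2) : G.Adj (f i) (f j) :=
  antihole_adj f le_rfl hn (by rw [h]; norm_cast)

theorem antihole_adj_three (hn : 5 ≤ n) {i j : Fin n} (h : j = i + 3) : G.Adj (f i) (f j) :=
  antihole_adj f (by norm_num) hn (by rw [h]; norm_cast)

theorem antihole_reachable (hn : 2 ≤ n) (i j : Fin n) : Gᶜ.Reachable (f i) (f j) :=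
  Fin.forall_of_imp_add_one (P := fun k => Gᶜ.Reachable (f i) (f k))
    (fun _ hk => hk.trans (antihole_compl_adj f hn rfl).reachable) (Reachable.refl (f i)) j

variable {f}

theorem NoCoTriangleMeetsTwice.not_compl_adj_antihole
    (hA : NoCoTriangleMeetsTwice G (Set.range f)) (hn : 2 ≤ n) {v : V} {i j : Fin n}
    (hij : j = i + 1) (hi : Gᶜ.Adj v (f i)) : ¬Gᶜ.Adj v (f j) := fun hj =>
  hA (Set.mem_range_self i) (Set.mem_range_self j) (antihole_compl_adj f hn hij) hi.symm hj.symm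

theorem adj_antihole_add_three (hC : C5Free G) (hA : NoCoTriangleMeetsTwice G (Set.range f))
    (hn : 5 ≤ n) {v : V} (hv : v ∉ Set.range f) {i : Fin n} (hi : Gᶜ.Adj v (f i)) :
    G.Adj v (f (i + 3)) := by
  refine adj_of_not_compl_adj_of_notMem_range hv fun hi₃ => ?_
  have hi₁ : G.Adj v (f (i + 1)) :=
    adj_of_not_compl_adj_of_notMem_range hv (hA.not_compl_adj_antihole (by omega) rfl hi)
  have hi₂ : G.Adj v (f (i + 2)) := adj_of_not_compl_adj_of_notMem_range hv fun hi₂ =>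
    hA.not_compl_adj_antihole (by omega) (by ring) hi₂ hi₃
  -- `v, f (i + 1), f (i + 3), f i, f (i + 2)` induce a `C5`
  exact hC.elim hi₁ (antihole_adj_two f (by omega) (by ring))
    (antihole_adj_three f hn rfl).symm (antihole_adj_two f (by omega) rfl) hi₂.symm hi₃ hi
    (antihole_compl_adj f (by omega) rfl).symm (antihole_compl_adj f (by omega) (by ring))
    (antihole_compl_adj f (by omega) (by ring)).symm

theorem compl_adj_antihole_add_two (hG : BannerFree G) (hC : C5Free G)
    (hA : NoCoTriangleMeetsTwice G (Set.range f)) (hn : 5 ≤ n) {y z : V}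
    (hy : y ∉ Set.range f) (hz : z ∉ Set.range f) (hyz : Gᶜ.Adj y z) {i : Fin n}
    (hyi : Gᶜ.Adj y (f i)) (hzi : Gᶜ.Adj z (f i)) : Gᶜ.Adj y (f (i + 2)) := by
  by_contra hy₂
  replace hy₂ := adj_of_not_compl_adj_of_notMem_range hy hy₂
  have h02 : G.Adj (f i) (f (i + 2)) := antihole_adj_two f (by omega) rfl
  -- a banner on the square `f (i + 3), y, f (i + 2), f i` with pendant `z`, or on the square
  -- `f (i + 2), y, f (i + 1), z` with pendant `f i`
  by_cases hz₂ : Gᶜ.Adj z (f (i + 2))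
  · exact hG.elim (adj_antihole_add_three hC hA hn hy hyi).symm hy₂ h02.symm
      (antihole_adj_three f hn rfl) (adj_antihole_add_three hC hA hn hz hzi).symm
      (antihole_compl_adj f (by omega) (by ring)).symm hyi hyz hz₂.symm hzi.symm
  · have hy₁ : G.Adj y (f (i + 1)) :=
      adj_of_not_compl_adj_of_notMem_range hy (hA.not_compl_adj_antihole (by omega) rfl hyi)
    have hz₁ : G.Adj z (f (i + 1)) :=
      adj_of_not_compl_adj_of_notMem_range hz (hA.not_compl_adj_antihole (by omega) rfl hzi)
    exact hG.elim hy₂.symm hy₁ hz₁.symm (adj_of_not_compl_adj_of_notMem_range hz hz₂) h02.symm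
      (antihole_compl_adj f (by omega) (by ring)).symm hyz hyi
      (antihole_compl_adj f (by omega) rfl).symm hzi

theorem adj_antihole_of_compl_adj (hG : BannerFree G) (hC : C5Free G)
    (hA : NoCoTriangleMeetsTwice G (Set.range f)) (hn : 5 ≤ n) (hodd : Odd n) {y z : V}
    (hy : y ∉ Set.range f) (hz : z ∉ Set.range f) (hyz : Gᶜ.Adj y z) {i : Fin n}
    (hyi : Gᶜ.Adj y (f i)) : G.Adj z (f i) := by
  refine adj_of_not_compl_adj_of_notMem_range hz fun hzi => ?_
  have hall : ∀ j, Gᶜ.Adj y (f j) ∧ Gᶜ.Adj z (f j) :=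
    Fin.forall_of_imp_add_two hodd (fun _ ⟨hyj, hzj⟩ =>
      ⟨compl_adj_antihole_add_two hG hC hA hn hy hz hyz hyj hzj,
        compl_adj_antihole_add_two hG hC hA hn hz hy hyz.symm hzj hyj⟩) ⟨hyi, hzi⟩
  exact hA.not_compl_adj_antihole (by omega) rfl (hall i).1 (hall (i + 1)).1

end Antihole

section CoTriangle

variable {V : Type*} {G : SimpleGraph V} {n : ℕ} [NeZero n] {f : (cycleGraph n)ᶜ ↪g G}

theorem compl_adj_antihole_add_one_of_coTriangle (hG : BannerFree G) (hC : C5Free G)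
    (hA : NoCoTriangleMeetsTwice G (Set.range f)) (hn : 5 ≤ n) (hodd : Odd n) {x y z : V}
    (hx : x ∉ Set.range f) (hy : y ∉ Set.range f) (hz : z ∉ Set.range f)
    (hxy : Gᶜ.Adj x y) (hxz : Gᶜ.Adj x z) (hyz : Gᶜ.Adj y z) {i : Fin n}
    (hxi : Gᶜ.Adj x (f i)) :
    Gᶜ.Adj x (f (i + 1)) ∨ Gᶜ.Adj y (f (i + 1)) ∨ Gᶜ.Adj z (f (i + 1)) := by
  by_contra! h
  obtain ⟨hx₁, hy₁, hz₁⟩ := h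
  -- a banner on the square `f (i + 1), y, f i, z` with pendant `x`
  exact hG.elim (adj_of_not_compl_adj_of_notMem_range hy hy₁).symm
    (adj_antihole_of_compl_adj hG hC hA hn hodd hx hy hxy hxi)
    (adj_antihole_of_compl_adj hG hC hA hn hodd hx hz hxz hxi).symm
    (adj_of_not_compl_adj_of_notMem_range hz hz₁)
    (adj_of_not_compl_adj_of_notMem_range hx hx₁).symm
    (antihole_compl_adj f (by omega) rfl).symm hyz hxy.symm hxi.symm hxz.symm

theorem forall_compl_adj_antihole_of_coTriangle (hG : BannerFree G) (hC : C5Free G)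
    (hA : NoCoTriangleMeetsTwice G (Set.range f)) (hn : 5 ≤ n) (hodd : Odd n) {x y z : V}
    (hx : x ∉ Set.range f) (hy : y ∉ Set.range f) (hz : z ∉ Set.range f)
    (hxy : Gᶜ.Adj x y) (hxz : Gᶜ.Adj x z) (hyz : Gᶜ.Adj y z) {i : Fin n}
    (hxi : Gᶜ.Adj x (f i)) (j : Fin n) :
    Gᶜ.Adj x (f j) ∨ Gᶜ.Adj y (f j) ∨ Gᶜ.Adj z (f j) := by
  refine Fin.forall_of_imp_add_one (P := fun j => Gᶜ.Adj x (f j) ∨ Gᶜ.Adj y (f j) ∨ Gᶜ.Adj z (f j))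
    (fun k hk => ?_) (Or.inl hxi) j
  rcases hk with h | h | h
  · exact compl_adj_antihole_add_one_of_coTriangle hG hC hA hn hodd hx hy hz hxy hxz hyz h
  · exact or_left_comm.1 <| compl_adj_antihole_add_one_of_coTriangle hG hC hA hn hodd
      hy hx hz hxy.symm hyz hxz h
  · exact Or.rotate <| compl_adj_antihole_add_one_of_coTriangle hG hC hA hn hodd
      hz hx hy hxz.symm hyz.symm hxy h

theorem not_compl_adj_antihole_of_coTriangle (hG : BannerFree G) (hC : C5Free G)
    (hA : NoCoTriangleMeetsTwice G (Set.range f)) (hn : 5 ≤ n) (hodd : Odd n) {x y z : V}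
    (hx : x ∉ Set.range f) (hy : y ∉ Set.range f) (hz : z ∉ Set.range f)
    (hxy : Gᶜ.Adj x y) (hxz : Gᶜ.Adj x z) (hyz : Gᶜ.Adj y z) {i : Fin n}
    (hxi : Gᶜ.Adj x (f i)) (hy₁ : Gᶜ.Adj y (f (i + 1))) : ¬Gᶜ.Adj z (f (i + 2)) := fun hz₂ =>
  -- `z, f (i + 1), x, f (i + 2), f i` induce a `C5`
  hC.elim (adj_antihole_of_compl_adj hG hC hA hn hodd hy hz hyz hy₁)
    (adj_antihole_of_compl_adj hG hC hA hn hodd hy hx hxy.symm hy₁).symm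
    (adj_antihole_of_compl_adj hG hC hA hn hodd hz hx hxz.symm hz₂)
    (antihole_adj_two f (by omega) rfl).symm
    (adj_antihole_of_compl_adj hG hC hA hn hodd hx hz hxz hxi).symm
    hxz.symm hz₂ (antihole_compl_adj f (by omega) (by ring))
    (antihole_compl_adj f (by omega) rfl).symm hxi

theorem false_of_coTriangle_compl_adj_antihole (hG : BannerFree G) (hC : C5Free G)
    (hA : NoCoTriangleMeetsTwice G (Set.range f)) (hn : 5 ≤ n) (hodd : Odd n) {x y z : V}
    (hx : x ∉ Set.range f) (hy : y ∉ Set.range f) (hz : z ∉ Set.range f)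
    (hxy : Gᶜ.Adj x y) (hxz : Gᶜ.Adj x z) (hyz : Gᶜ.Adj y z) {i : Fin n}
    (hxi : Gᶜ.Adj x (f i)) : False := by
  have cover := forall_compl_adj_antihole_of_coTriangle hG hC hA hn hodd hx hy hz hxy hxz hyz hxi
  have step (j : Fin n) (hj : Gᶜ.Adj x (f j)) : Gᶜ.Adj x (f (j + 2)) := by
    have hn₂ : 2 ≤ n := by omega
    rcases cover (j + 1) with h₁ | h₁ | h₁
    · exact absurd h₁ (hA.not_compl_adj_antihole hn₂ rfl hj)
    · rcases cover (j + 2) with h₂ | h₂ | h₂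
      · exact h₂
      · exact absurd h₂ (hA.not_compl_adj_antihole hn₂ (by ring) h₁)
      · exact absurd h₂ (not_compl_adj_antihole_of_coTriangle hG hC hA hn hodd
          hx hy hz hxy hxz hyz hj h₁)
    · rcases cover (j + 2) with h₂ | h₂ | h₂
      · exact h₂
      · exact absurd h₂ (not_compl_adj_antihole_of_coTriangle hG hC hA hn hodd
          hx hz hy hxz hxy hyz.symm hj h₁)
      · exact absurd h₂ (hA.not_compl_adj_antihole hn₂ (by ring) h₁)
  have hall := Fin.forall_of_imp_add_two hodd step hxi
  exact hA.not_compl_adj_antihole (by omega) rfl (hall i) (hall (i + 1))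

theorem false_of_coTriangle_mem_range (hG : BannerFree G) (hC : C5Free G)
    (hA : NoCoTriangleMeetsTwice G (Set.range f)) (hn : 5 ≤ n) (hodd : Odd n) {x y z : V}
    (hxy : Gᶜ.Adj x y) (hxz : Gᶜ.Adj x z) (hyz : Gᶜ.Adj y z) (hx : x ∈ Set.range f) :
    False := by
  obtain ⟨i, rfl⟩ := hx
  have hy : y ∉ Set.range f := fun hy => hA (Set.mem_range_self i) hy hxy hxz hyz
  have hz : z ∉ Set.range f := fun hz => hA (Set.mem_range_self i) hz hxz hxy hyz.symm
  exact hxz.symm.2 (adj_antihole_of_compl_adj hG hC hA hn hodd hy hz hyz hxy.symm)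

end CoTriangle

/-- `¬G.Adj v x` holds both for `v = x` and for `Gᶜ.Adj v x`: `v` lies within distance one of a
triangle of `Gᶜ`. -/
def NearCoTriangle {V : Type*} (G : SimpleGraph V) (v : V) : Prop :=
  ∃ x y z, Gᶜ.Adj x y ∧ Gᶜ.Adj x z ∧ Gᶜ.Adj y z ∧ ¬G.Adj v x

section NearCoTriangle

variable {V : Type*} {G : SimpleGraph V}

theorem BannerFree.nearCoTriangle_of_compl_adj (hG : BannerFree G) {u w : V}
    (hu : NearCoTriangle G u) (huw : Gᶜ.Adj u w) : NearCoTriangle G w := by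
  obtain ⟨x, y, z, hxy, hxz, hyz, hux⟩ := hu
  by_contra hw
  simp only [NearCoTriangle, not_exists, not_and, not_not] at hw
  have hwx := hw x y z hxy hxz hyz
  have hwy := hw y x z hxy.symm hyz hxz
  have hwz := hw z x y hxz.symm hyz.symm hxy
  have hwu : ¬G.Adj w u := huw.symm.2
  have hux' : Gᶜ.Adj u x := ⟨fun h => hwu (h ▸ hwx), hux⟩
  have huy : G.Adj u y :=
    adj_of_not_compl_adj (fun huy => hwu (hw u x y hux' huy hxy)) fun h => hwu (h ▸ hwy)
  have huz : G.Adj u z :=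
    adj_of_not_compl_adj (fun huz => hwu (hw u x z hux' huz hxz)) fun h => hwu (h ▸ hwz)
  -- a banner on the square `w, y, u, z` with pendant `x`
  exact hG.elim hwy huy.symm huz hwz.symm hwx huw.symm hyz hxy.symm hux' hxz.symm

theorem BannerFree.nearCoTriangle_of_reachable (hG : BannerFree G) {u w : V}
    (h : Gᶜ.Reachable u w) (hu : NearCoTriangle G u) : NearCoTriangle G w := by
  obtain ⟨p⟩ := h
  induction p with
  | nil => exact hu
  | cons h _ ih => exact ih (hG.nearCoTriangle_of_compl_adj hu h)

theorem not_nearCoTriangle_antihole {n : ℕ} [NeZero n] {f : (cycleGraph n)ᶜ ↪g G}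
    (hG : BannerFree G) (hC : C5Free G) (hA : NoCoTriangleMeetsTwice G (Set.range f))
    (hn : 5 ≤ n) (hodd : Odd n) (i : Fin n) : ¬NearCoTriangle G (f i) := by
  rintro ⟨x, y, z, hxy, hxz, hyz, hix⟩
  have hx : x ∉ Set.range f := false_of_coTriangle_mem_range hG hC hA hn hodd hxy hxz hyz
  have hy : y ∉ Set.range f :=
    false_of_coTriangle_mem_range hG hC hA hn hodd hxy.symm hyz hxz
  have hz : z ∉ Set.range f :=
    false_of_coTriangle_mem_range hG hC hA hn hodd hxz.symm hyz.symm hxy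
  have hxi : Gᶜ.Adj x (f i) :=
    ⟨(ne_of_mem_of_not_mem (Set.mem_range_self i) hx).symm, fun h => hix h.symm⟩
  exact false_of_coTriangle_compl_adj_antihole hG hC hA hn hodd hx hy hz hxy hxz hyz hxi

end NearCoTriangle

theorem stmt_0_general {V : Type*} (G : SimpleGraph V)
    (hbf : BannerFree G) (hc5 : C5Free G)
    (A : Set V) (hA : IsOddAntihole G A)
    (hno2 : ∀ t : Finset V, Gᶜ.IsNClique 3 t →
      ∀ a ∈ t, ∀ b ∈ t, a ∈ A → b ∈ A → a = b) :
    ∃ O : Gᶜ.ConnectedComponent, A ⊆ O.supp ∧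
      ∀ t : Finset V, ↑t ⊆ O.supp → ¬ Gᶜ.IsNClique 3 t := by
  classical
  obtain ⟨n, hn, hodd, ⟨φ⟩⟩ := hA
  have : NeZero n := ⟨by omega⟩
  let f : (cycleGraph n)ᶜ ↪g G := (Embedding.induce A).comp φ.toEmbedding
  have hfA : Set.range f = A := by
    ext v
    refine ⟨?_, fun hv => ⟨φ.symm ⟨v, hv⟩, by simp [f]⟩⟩
    rintro ⟨i, rfl⟩
    exact (φ i).2
  have hA2 : NoCoTriangleMeetsTwice G (Set.range f) := fun x y z hx hy hxy hxz hyz =>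
    hxy.ne (hno2 {x, y, z} (is3Clique_triple_iff.2 ⟨hxy, hxz, hyz⟩) x (by simp) y (by simp)
      (hfA ▸ hx) (hfA ▸ hy))
  refine ⟨Gᶜ.connectedComponentMk (f 0), ?_, fun t ht htri => ?_⟩
  · rw [← hfA]
    rintro _ ⟨i, rfl⟩
    exact ConnectedComponent.sound (antihole_reachable f (by omega) i 0)
  · obtain ⟨x, y, z, -, -, -, rfl⟩ := Finset.card_eq_three.mp htri.card_eq
    obtain ⟨hxy, hxz, hyz⟩ := is3Clique_triple_iff.1 htri
    have hx : Gᶜ.Reachable x (f 0) := ConnectedComponent.exact (ht (by simp))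
    exact not_nearCoTriangle_antihole hbf hc5 hA2 hn hodd 0
      (hbf.nearCoTriangle_of_reachable hx ⟨x, y, z, hxy, hxz, hyz, G.irrefl⟩)

/-- Let `G` be a (banner, C5)-free graph containing an odd antihole `A` such
that (i) `α(G) ≥ 3` (i.e. `G` has a co-triangle), and (ii) no co-triangle of `G` contains
two vertices of `A`.  Then the complement of `G` has a triangle-free connected component
whose vertex set contains all of `A`. -/
theorem stmt_0 {V : Type*} [Fintype V] (G : SimpleGraph V)
    (hbf : BannerFree G) (hc5 : C5Free G)
    (A : Set V) (hA : IsOddAntihole G A)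
    (halpha : ∃ t : Finset V, Gᶜ.IsNClique 3 t)
    (hno2 : ∀ t : Finset V, Gᶜ.IsNClique 3 t →
      ∀ a ∈ t, ∀ b ∈ t, a ∈ A → b ∈ A → a = b) :
    ∃ O : Gᶜ.ConnectedComponent, A ⊆ O.supp ∧
      ∀ t : Finset V, ↑t ⊆ O.supp → ¬ Gᶜ.IsNClique 3 t :=
  stmt_0_general G hbf hc5 A hA hno2
end

section
/- Let G be a (banner, C5)-free graph with an odd antihole A, and suppose some two vertices of A belong to a co-triangle of G. Then there is a homogeneous set H of G such that H contains A and no co-triangle of the subgraph of G induced by H contains two vertices of A. -/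
open SimpleGraph

/-!
Index the odd antihole `A` periodically by `w : ℤ → V`, so that `w i` and `w j` are adjacent
unless `i - j ≡ 0, ±1 (mod n)`. Since `C₅` is self-complementary, C5-freeness gives `n ≥ 7`.

Banner-freeness, through explicit banners, gives three facts about a vertex `x ∉ A`:
if it has two consecutive non-neighbours in `A` it has no neighbour in `A`; if it has a neighbour
in `A` and a neighbour `z` anticomplete to `A`, it is complete to `A`; and if it has a neighbour
in `A`, it is adjacent to every `e` complete to `A` that has a neighbour `z` anticomplete to `A`
and not adjacent to `x`. The last two use that `n` is odd: a property of `w i` preserved by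
`i ↦ i + 2` holds for all `i`.

Let `Z` be the set of vertices anticomplete to `A` and `W` the set of vertices complete to `A`
with a neighbour in `Z`. By these facts `Z` is anticomplete and `W` complete to
`H = V ∖ (Z ∪ W) ⊇ A`. The third vertex of a co-triangle through two vertices of `A` has two
consecutive non-neighbours in `A`, hence lies in `Z`: this makes `H ≠ V` and shows that no
co-triangle inside `H` contains two vertices of `A`.
-/

open Function

theorem Int.dvd_iff_of_lt_two_mul {n x : ℤ} (h₁ : -(2 * n) < x) (h₂ : x < 2 * n) :
    n ∣ x ↔ x = -n ∨ x = 0 ∨ x = n := by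
  constructor
  · intro h
    have key : ∀ y, n ∣ y → -n < y → y < n → y = 0 := fun y hy hl hu =>
      Int.eq_zero_of_abs_lt_dvd hy (abs_lt.2 ⟨hl, hu⟩)
    by_cases hl : x ≤ -n
    · have := key (x + n) (dvd_add h dvd_rfl) (by omega) (by omega); omega
    by_cases hu : n ≤ x
    · have := key (x - n) (dvd_sub h dvd_rfl) (by omega) (by omega); omega
    · have := key x h (by omega) (by omega); omega
  · rintro (rfl | rfl | rfl) <;> simp

theorem Function.Periodic.forall_of_imp_add_two {α : Type*} {f : ℤ → α} {n : ℕ}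
    (hf : Periodic f n) (hn : Odd n) {P : α → Prop} (h2 : ∀ i, P (f i) → P (f (i + 2)))
    {t : ℤ} (ht : P (f t)) (a : ℤ) : P (f a) := by
  obtain ⟨q, rfl⟩ := hn
  have iter : ∀ (k : ℕ) i, P (f i) → P (f (i + 2 * k)) := by
    intro k
    induction k with
    | zero => simp
    | succ k ih => intro i hi; simpa [mul_add, ← add_assoc] using h2 _ (ih i hi)
  have up : ∀ i, P (f i) → P (f (i + 1)) := fun i hi => by
    rw [← hf (i + 1)]
    convert iter (q + 1) i hi using 2
    push_cast; ring
  have down : ∀ i, P (f (i + 1)) → P (f i) := fun i hi => by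
    rw [← hf i]
    convert iter q (i + 1) hi using 2
    push_cast; ring
  suffices ∀ k : ℤ, P (f (t + k)) by simpa using this (a - t)
  intro k
  induction k using Int.induction_on with
  | zero => simpa using ht
  | succ k hk => simpa [add_assoc] using up _ hk
  | pred k hk => exact down _ (by convert hk using 2; ring)

theorem Int.exists_and_not_add_one_and_not_add_two {P : ℤ → Prop} {r i : ℤ} (hr : P r)
    (hri : r ≤ i) (hi : ¬ P i) (hi₁ : ¬ P (i + 1)) :
    ∃ b, P b ∧ ¬ P (b + 1) ∧ ¬ P (b + 2) := by
  induction i, hri using Int.leInduction with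
  | base => exact absurd hr hi
  | succ i _ ih =>
    by_cases h : P i
    · exact ⟨i, h, hi, by rwa [add_assoc] at hi₁⟩
    · exact ih h hi

section

variable {V : Type*} {G : SimpleGraph V}

theorem nonempty_banner_embedding {a₀ a₁ a₂ a₃ a₄ : V}
    (h₀₁ : G.Adj a₀ a₁) (h₁₂ : G.Adj a₁ a₂) (h₂₃ : G.Adj a₂ a₃) (h₀₃ : G.Adj a₀ a₃)
    (h₀₄ : G.Adj a₀ a₄) (h₀₂ : ¬ G.Adj a₀ a₂) (h₁₃ : ¬ G.Adj a₁ a₃) (h₁₄ : ¬ G.Adj a₁ a₄)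
    (h₂₄ : ¬ G.Adj a₂ a₄) (h₃₄ : ¬ G.Adj a₃ a₄) (hne : a₁ ≠ a₃) :
    Nonempty (banner ↪g G) := by
  let f : Fin 5 → V := ![a₀, a₁, a₂, a₃, a₄]
  have adj_iff : ∀ i j, G.Adj (f i) (f j) ↔ banner.Adj i j := by
    intro i j
    fin_cases i <;> fin_cases j <;> simp [f, banner, G.adj_comm, *]
  have f_inj : f.Injective := by
    intro i j h
    fin_cases i <;> fin_cases j <;> simp [f] at h ⊢ <;> subst h <;> simp_all [G.adj_comm]
  exact ⟨⟨⟨f, f_inj⟩, adj_iff _ _⟩⟩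

/-- `w` runs periodically around an antihole of length `n`, its indices read modulo `n`. -/
structure IsAntiholeEnum (G : SimpleGraph V) (n : ℕ) (w : ℤ → V) : Prop where
  eq_iff (i j : ℤ) : w i = w j ↔ (n : ℤ) ∣ i - j
  adj_iff (i j : ℤ) : G.Adj (w i) (w j) ↔
    ¬ (n : ℤ) ∣ i - j ∧ ¬ (n : ℤ) ∣ i - j - 1 ∧ ¬ (n : ℤ) ∣ i - j + 1

theorem exists_isAntiholeEnum {A : Set V} {n : ℕ} (hn : 2 ≤ n)
    (φ : (cycleGraph n)ᶜ ≃g G.induce A) :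
    ∃ w : ℤ → V, IsAntiholeEnum G n w ∧ Set.range w = A := by
  obtain ⟨m, rfl⟩ : ∃ m, n = m + 2 := ⟨n - 2, by omega⟩
  have φ_eq_iff (x y : ZMod (m + 2)) : φ x = φ y ↔ x = y := φ.injective.eq_iff
  have φ_adj_iff (x y : ZMod (m + 2)) :
      (G.induce A).Adj (φ x) (φ y) ↔ x ≠ y ∧ ¬ (x - y = 1 ∨ y - x = 1) := φ.map_adj_iff
  have cast_eq_iff (i j : ℤ) : (i : ZMod (m + 2)) = j ↔ ((m + 2 : ℕ) : ℤ) ∣ i - j := by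
    rw [ZMod.intCast_eq_intCast_iff_dvd_sub, dvd_sub_comm]
  have cast_sub_eq_one_iff (i j : ℤ) :
      (i : ZMod (m + 2)) - j = 1 ↔ ((m + 2 : ℕ) : ℤ) ∣ i - j - 1 := by
    rw [← Int.cast_sub, ← Int.cast_one, cast_eq_iff]
  refine ⟨fun i => φ (i : ZMod (m + 2)), ⟨fun i j => ?_, fun i j => ?_⟩, ?_⟩
  · rw [Subtype.val_inj, φ_eq_iff, cast_eq_iff]
  · change (G.induce A).Adj _ _ ↔ _
    rw [φ_adj_iff, cast_sub_eq_one_iff, cast_sub_eq_one_iff, ne_eq, cast_eq_iff,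
      show j - i - 1 = -(i - j + 1) by ring, dvd_neg]
    tauto
  · refine Set.Subset.antisymm (Set.range_subset_iff.2 fun i => (φ _).2) fun a ha => ?_
    have cast_val (x : ZMod (m + 2)) : ((x.val : ℤ) : ZMod (m + 2)) = x := by
      rw [Int.cast_natCast, ZMod.natCast_zmod_val]
    obtain ⟨x, hx⟩ : ∃ x : ZMod (m + 2), φ x = ⟨a, ha⟩ := φ.surjective _
    refine ⟨(x.val : ℤ), ?_⟩
    change (φ ((x.val : ℤ) : ZMod (m + 2))).1 = a
    rw [cast_val, hx]

variable {n : ℕ} {w : ℤ → V}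

namespace IsAntiholeEnum

variable {i j k p : ℤ}

theorem periodic (hw : IsAntiholeEnum G n w) : Periodic w n :=
  fun i => (hw.eq_iff _ _).2 (by simp)

theorem eq_iff_of_lt (hw : IsAntiholeEnum G n w) (h₁ : i < j + n) (h₂ : j < i + n) :
    w i = w j ↔ i = j := by
  rw [hw.eq_iff, Int.dvd_iff_of_lt_two_mul (by omega) (by omega)]
  omega

theorem adj_iff_of_lt (hw : IsAntiholeEnum G n w) (h₁ : i < j + n) (h₂ : j < i + n) :
    G.Adj (w i) (w j) ↔ 2 ≤ i - j ∧ i - j + 2 ≤ n ∨ 2 ≤ j - i ∧ j - i + 2 ≤ n := by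
  rw [hw.adj_iff, Int.dvd_iff_of_lt_two_mul (by omega) (by omega),
    Int.dvd_iff_of_lt_two_mul (by omega) (by omega),
    Int.dvd_iff_of_lt_two_mul (by omega) (by omega)]
  omega

theorem adj (hw : IsAntiholeEnum G n w)
    (h : 2 ≤ i - j ∧ i - j + 2 ≤ n ∨ 2 ≤ j - i ∧ j - i + 2 ≤ n) : G.Adj (w i) (w j) :=
  (hw.adj_iff_of_lt (by omega) (by omega)).2 h

theorem not_adj (hw : IsAntiholeEnum G n w) (h : i ≤ j + 1 ∧ j ≤ i + 1) :
    ¬ G.Adj (w i) (w j) := by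
  rw [hw.adj_iff]
  rcases (by omega : i - j = 0 ∨ i - j - 1 = 0 ∨ i - j + 1 = 0) with h | h | h <;> simp [h]

theorem ne (hw : IsAntiholeEnum G n w) (h : i < j ∧ j < i + n ∨ j < i ∧ i < j + n) :
    w i ≠ w j := by
  rw [ne_eq, hw.eq_iff_of_lt (by omega) (by omega)]
  omega

theorem eq_or_eq_of_not_adj_of_not_adj (hw : IsAntiholeEnum G n w) (hn : 4 ≤ n)
    (h : ¬ G.Adj (w k) (w p)) (h₁ : ¬ G.Adj (w k) (w (p + 1))) :
    w k = w p ∨ w k = w (p + 1) := by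
  obtain ⟨k', hk', hkk'⟩ := hw.periodic.exists_mem_Ico (by omega) k (p - 1)
  simp only [Set.mem_Ico] at hk'
  rw [hkk', hw.adj_iff_of_lt (by omega) (by omega)] at h h₁
  rw [hkk', hw.eq_iff_of_lt (by omega) (by omega), hw.eq_iff_of_lt (by omega) (by omega)]
  omega

theorem exists_eq_add_one_of_not_adj (hw : IsAntiholeEnum G n w) (hn : 4 ≤ n)
    (h : ¬ G.Adj (w i) (w j)) (hne : w i ≠ w j) :
    ∃ p, w i = w p ∧ w j = w (p + 1) ∨ w i = w (p + 1) ∧ w j = w p := by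
  obtain ⟨j', hj', hjj'⟩ := hw.periodic.exists_mem_Ico (by omega) j (i - 1)
  simp only [Set.mem_Ico] at hj'
  rw [hjj', hw.adj_iff_of_lt (by omega) (by omega)] at h
  rw [hjj', ne_eq, hw.eq_iff_of_lt (by omega) (by omega)] at hne
  rcases (by omega : j' = i + 1 ∨ j' = i - 1) with rfl | rfl
  · exact ⟨i, Or.inl ⟨rfl, hjj'⟩⟩
  · exact ⟨i - 1, Or.inr ⟨by rw [sub_add_cancel], hjj'⟩⟩

end IsAntiholeEnum

theorem BannerFree.not_adj_of_not_adj_of_not_adj_add_one (hbf : BannerFree G)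
    (hw : IsAntiholeEnum G n w) (hn : 7 ≤ n) {c : V} (hc : c ∉ Set.range w)
    {i : ℤ} (hi : ¬ G.Adj c (w i)) (hi₁ : ¬ G.Adj c (w (i + 1))) (j : ℤ) :
    ¬ G.Adj c (w j) := by
  intro hj
  obtain ⟨r, hr, hjr⟩ := hw.periodic.exists_mem_Ico (by omega) j (i - n)
  obtain ⟨b, hb, hb₁, hb₂⟩ := Int.exists_and_not_add_one_and_not_add_two
    (P := fun k => G.Adj c (w k)) (hjr ▸ hj) (by simp only [Set.mem_Ico] at hr; omega) hi hi₁
  have hcw (k : ℤ) : c ≠ w k := fun h => hc ⟨k, h.symm⟩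
  by_cases h₃ : G.Adj c (w (b + 3))
  · by_cases h₄ : G.Adj c (w (b + 4))
    · exact hbf (nonempty_banner_embedding (a₀ := w (b + 4)) (a₁ := c) (a₂ := w (b + 3))
        (a₃ := w (b + 1)) (a₄ := w (b + 2)) h₄.symm h₃ (hw.adj (by omega)) (hw.adj (by omega))
        (hw.adj (by omega)) (hw.not_adj (by omega)) hb₁ hb₂ (hw.not_adj (by omega))
        (hw.not_adj (by omega)) (hcw _))
    by_cases h₅ : G.Adj c (w (b + 5))
    · exact hbf (nonempty_banner_embedding (a₀ := w (b + 5)) (a₁ := w (b + 1))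
        (a₂ := w (b + 4)) (a₃ := w (b + 2)) (a₄ := c) (hw.adj (by omega)) (hw.adj (by omega))
        (hw.adj (by omega)) (hw.adj (by omega)) h₅.symm (hw.not_adj (by omega))
        (hw.not_adj (by omega)) (fun h => hb₁ h.symm) (fun h => h₄ h.symm)
        (fun h => hb₂ h.symm) (hw.ne (by omega)))
    · exact hbf (nonempty_banner_embedding (a₀ := w b) (a₁ := w (b + 4)) (a₂ := w (b + 1))
        (a₃ := w (b + 5)) (a₄ := c) (hw.adj (by omega)) (hw.adj (by omega))
        (hw.adj (by omega)) (hw.adj (by omega)) hb.symm (hw.not_adj (by omega))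
        (hw.not_adj (by omega)) (fun h => h₄ h.symm) (fun h => hb₁ h.symm)
        (fun h => h₅ h.symm) (hw.ne (by omega)))
  by_cases hm₁ : G.Adj c (w (b - 1))
  · exact hbf (nonempty_banner_embedding (a₀ := w (b - 1)) (a₁ := c) (a₂ := w b)
      (a₃ := w (b + 2)) (a₄ := w (b + 1)) hm₁.symm hb (hw.adj (by omega)) (hw.adj (by omega))
      (hw.adj (by omega)) (hw.not_adj (by omega)) hb₂ hb₁ (hw.not_adj (by omega))
      (hw.not_adj (by omega)) (hcw _))
  · exact hbf (nonempty_banner_embedding (a₀ := w b) (a₁ := w (b + 2)) (a₂ := w (b - 1))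
      (a₃ := w (b + 3)) (a₄ := c) (hw.adj (by omega)) (hw.adj (by omega))
      (hw.adj (by omega)) (hw.adj (by omega)) hb.symm (hw.not_adj (by omega))
      (hw.not_adj (by omega)) (fun h => hb₂ h.symm) (fun h => hm₁ h.symm)
      (fun h => h₃ h.symm) (hw.ne (by omega)))

theorem BannerFree.adj_of_adj_of_anticomplete (hbf : BannerFree G) (hw : IsAntiholeEnum G n w)
    (hn : 7 ≤ n) (hodd : Odd n) {z x : V} (hz : ∀ i, ¬ G.Adj z (w i)) (hzx : G.Adj z x)
    (hx : x ∉ Set.range w) {a : ℤ} (ha : G.Adj x (w a)) (j : ℤ) : G.Adj x (w j) := by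
  by_contra hj
  have hgap (k : ℤ) (hk : ¬ G.Adj x (w k)) : G.Adj x (w (k + 1)) := by
    by_contra hk₁
    exact hbf.not_adj_of_not_adj_of_not_adj_add_one hw hn hx hk hk₁ a ha
  obtain ⟨t, ht, ht₂⟩ : ∃ t, ¬ G.Adj x (w t) ∧ G.Adj x (w (t + 2)) := by
    by_contra! hno
    exact hw.periodic.forall_of_imp_add_two hodd (P := fun v => ¬ G.Adj x v) hno hj a ha
  have hzw (k : ℤ) : ¬ G.Adj (w k) z := fun h => hz k h.symm
  by_cases hm₂ : G.Adj x (w (t - 2))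
  · by_cases hm₃ : G.Adj x (w (t - 3))
    · exact hbf (nonempty_banner_embedding (a₀ := x) (a₁ := w (t - 2)) (a₂ := w t)
        (a₃ := w (t - 3)) (a₄ := z) hm₂ (hw.adj (by omega)) (hw.adj (by omega)) hm₃ hzx.symm
        ht (hw.not_adj (by omega)) (hzw _) (hzw _) (hzw _) (hw.ne (by omega)))
    · exact hbf (nonempty_banner_embedding (a₀ := x) (a₁ := w (t + 2)) (a₂ := w (t - 3))
        (a₃ := w (t + 1)) (a₄ := z) ht₂ (hw.adj (by omega)) (hw.adj (by omega)) (hgap t ht)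
        hzx.symm hm₃ (hw.not_adj (by omega)) (hzw _) (hzw _) (hzw _) (hw.ne (by omega)))
  · exact hbf (nonempty_banner_embedding (a₀ := x) (a₁ := w (t + 2)) (a₂ := w (t - 2))
      (a₃ := w (t + 1)) (a₄ := z) ht₂ (hw.adj (by omega)) (hw.adj (by omega)) (hgap t ht)
      hzx.symm hm₂ (hw.not_adj (by omega)) (hzw _) (hzw _) (hzw _) (hw.ne (by omega)))

theorem BannerFree.adj_of_complete_of_anticomplete (hbf : BannerFree G)
    (hw : IsAntiholeEnum G n w) (hn : 7 ≤ n) (hodd : Odd n) {z e x : V}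
    (hz : ∀ i, ¬ G.Adj z (w i)) (he : ∀ i, G.Adj e (w i)) (hze : G.Adj z e)
    (hzx : ¬ G.Adj z x) (hx : x ∉ Set.range w) {a : ℤ} (ha : G.Adj x (w a)) : G.Adj e x := by
  by_contra hex
  obtain ⟨y, hy, hy₁⟩ : ∃ y, G.Adj x (w y) ∧ G.Adj x (w (y + 1)) := by
    by_contra! hno
    have hgap (k : ℤ) (hk : ¬ G.Adj x (w k)) : G.Adj x (w (k + 1)) := by
      by_contra hk₁
      exact hbf.not_adj_of_not_adj_of_not_adj_add_one hw hn hx hk hk₁ a ha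
    refine hw.periodic.forall_of_imp_add_two hodd (P := fun v => ¬ G.Adj x v)
      (fun k hk => ?_) (hno a ha) a ha
    simpa [add_assoc] using hno _ (hgap k hk)
  exact hbf (nonempty_banner_embedding (a₀ := e) (a₁ := w y) (a₂ := x) (a₃ := w (y + 1))
    (a₄ := z) (he y) hy.symm hy₁ (he _) hze.symm hex (hw.not_adj (by omega))
    (fun h => hz y h.symm) (fun h => hzx h.symm) (fun h => hz _ h.symm) (hw.ne (by omega)))

def anticompleteSet (G : SimpleGraph V) (w : ℤ → V) : Set V := {x | ∀ i, ¬ G.Adj x (w i)}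

def completeLinkedSet (G : SimpleGraph V) (w : ℤ → V) : Set V :=
  {x | (∀ i, G.Adj x (w i)) ∧ ∃ z ∈ anticompleteSet G w, G.Adj z x}

theorem IsAntiholeEnum.range_subset_compl (hw : IsAntiholeEnum G n w) (hn : 4 ≤ n) :
    Set.range w ⊆ (anticompleteSet G w ∪ completeLinkedSet G w)ᶜ := by
  rintro _ ⟨i, rfl⟩ (hZ | hW)
  · exact hZ (i + 2) (hw.adj (by omega))
  · exact G.loopless.irrefl _ (hW.1 i)

theorem BannerFree.not_adj_of_mem_anticompleteSet (hbf : BannerFree G)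
    (hw : IsAntiholeEnum G n w) (hn : 7 ≤ n) (hodd : Odd n) {z x : V}
    (hz : z ∈ anticompleteSet G w) (hx : x ∉ anticompleteSet G w ∪ completeLinkedSet G w) :
    ¬ G.Adj z x := by
  intro hzx
  have hxA : x ∉ Set.range w := by
    rintro ⟨i, rfl⟩
    exact hz i hzx
  obtain ⟨a, ha⟩ : ∃ a, G.Adj x (w a) := by
    by_contra! h
    exact hx (Or.inl h)
  exact hx (Or.inr ⟨hbf.adj_of_adj_of_anticomplete hw hn hodd hz hzx hxA ha, z, hz, hzx⟩)

theorem BannerFree.adj_of_mem_completeLinkedSet (hbf : BannerFree G)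
    (hw : IsAntiholeEnum G n w) (hn : 7 ≤ n) (hodd : Odd n) {e x : V}
    (he : e ∈ completeLinkedSet G w) (hx : x ∉ anticompleteSet G w ∪ completeLinkedSet G w) :
    G.Adj e x := by
  by_cases hxA : x ∈ Set.range w
  · obtain ⟨i, rfl⟩ := hxA
    exact he.1 i
  obtain ⟨z, hz, hze⟩ := he.2
  obtain ⟨a, ha⟩ : ∃ a, G.Adj x (w a) := by
    by_contra! h
    exact hx (Or.inl h)
  exact hbf.adj_of_complete_of_anticomplete hw hn hodd hz he.1 hze
    (hbf.not_adj_of_mem_anticompleteSet hw hn hodd hz hx) hxA ha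

theorem BannerFree.isHomogeneous_compl [Finite V] (hbf : BannerFree G)
    (hw : IsAntiholeEnum G n w) (hn : 7 ≤ n) (hodd : Odd n)
    (hZ : (anticompleteSet G w).Nonempty) :
    IsHomogeneous G (anticompleteSet G w ∪ completeLinkedSet G w)ᶜ := by
  obtain ⟨z, hz⟩ := hZ
  refine ⟨?_, fun h => ?_, fun x hx => ?_⟩
  · exact (Set.one_lt_ncard (Set.toFinite _)).2 ⟨w 0, hw.range_subset_compl (by omega) ⟨0, rfl⟩,
      w 1, hw.range_subset_compl (by omega) ⟨1, rfl⟩, hw.ne (by omega)⟩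
  · exact (Set.eq_univ_iff_forall.1 h z) (Or.inl hz)
  · rcases Set.not_notMem.1 hx with hx | hx
    · exact Or.inr fun y hy => hbf.not_adj_of_mem_anticompleteSet hw hn hodd hx hy
    · exact Or.inl fun y hy => hbf.adj_of_mem_completeLinkedSet hw hn hodd hx hy

theorem BannerFree.mem_anticompleteSet_of_not_adj (hbf : BannerFree G)
    (hw : IsAntiholeEnum G n w) (hn : 7 ≤ n) {i j : ℤ} {c : V} (hij : ¬ G.Adj (w i) (w j))
    (hne : w i ≠ w j) (hci : ¬ G.Adj c (w i)) (hcj : ¬ G.Adj c (w j)) (hci' : c ≠ w i)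
    (hcj' : c ≠ w j) : c ∈ anticompleteSet G w := by
  obtain ⟨p, hp⟩ := hw.exists_eq_add_one_of_not_adj (by omega) hij hne
  obtain ⟨hp, hp₁, hcp, hcp₁⟩ :
      ¬ G.Adj c (w p) ∧ ¬ G.Adj c (w (p + 1)) ∧ c ≠ w p ∧ c ≠ w (p + 1) := by
    rcases hp with ⟨hi, hj⟩ | ⟨hi, hj⟩ <;> rw [← hi, ← hj] <;> tauto
  have hc : c ∉ Set.range w := by
    rintro ⟨k, rfl⟩
    rcases hw.eq_or_eq_of_not_adj_of_not_adj (by omega) hp hp₁ with h | h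
    exacts [hcp h, hcp₁ h]
  exact hbf.not_adj_of_not_adj_of_not_adj_add_one hw hn hc hp hp₁

theorem BannerFree.exists_mem_anticompleteSet_of_isNClique (hbf : BannerFree G)
    (hw : IsAntiholeEnum G n w) (hn : 7 ≤ n) {t : Finset V} (ht : Gᶜ.IsNClique 3 t)
    {a b : V} (hat : a ∈ t) (hbt : b ∈ t) (hab : a ≠ b) (ha : a ∈ Set.range w)
    (hb : b ∈ Set.range w) : ∃ c ∈ t, c ∈ anticompleteSet G w := by
  classical
  have hna {x y : V} (hx : x ∈ t) (hy : y ∈ t) (hxy : x ≠ y) : ¬ G.Adj x y :=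
    ((compl_adj G x y).1 (ht.isClique hx hy hxy)).2
  obtain ⟨c, hc, hcb⟩ := Finset.exists_mem_ne (s := t.erase a)
    (by rw [Finset.card_erase_of_mem hat, ht.card_eq]; decide) b
  obtain ⟨hca, hct⟩ := Finset.mem_erase.1 hc
  obtain ⟨i, rfl⟩ := ha
  obtain ⟨j, rfl⟩ := hb
  exact ⟨c, hct, hbf.mem_anticompleteSet_of_not_adj hw hn (hna hat hbt hab) hab
    (hna hct hat hca) (hna hct hbt hcb) hca hcb⟩

theorem C5Free.not_nonempty_compl_cycleGraph_five_iso {A : Set V} (hc5 : C5Free G) :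
    ¬ Nonempty ((cycleGraph 5)ᶜ ≃g G.induce A) := by
  rintro ⟨φ⟩
  let ψ : cycleGraph 5 ≃g (cycleGraph 5)ᶜ :=
    ⟨⟨![0, 2, 4, 1, 3], ![0, 3, 1, 4, 2], by decide, by decide⟩, by decide⟩
  exact hc5 ⟨(Embedding.induce A).comp (φ.toEmbedding.comp ψ.toEmbedding)⟩

end

/-- Let `G` be a (banner, C5)-free graph with an odd antihole `A`, and
suppose some two vertices of `A` belong to a co-triangle of `G`.  Then there is a
homogeneous set `H` of `G` containing `A` such that no co-triangle of `G[H]` contains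
two vertices of `A`. -/
theorem stmt_1 {V : Type*} [Fintype V] (G : SimpleGraph V)
    (hbf : BannerFree G) (hc5 : C5Free G)
    (A : Set V) (hA : IsOddAntihole G A)
    (hco : ∃ t : Finset V, Gᶜ.IsNClique 3 t ∧
      ∃ a ∈ t, ∃ b ∈ t, a ≠ b ∧ a ∈ A ∧ b ∈ A) :
    ∃ H : Set V, IsHomogeneous G H ∧ A ⊆ H ∧
      ∀ t : Finset V, ↑t ⊆ H → Gᶜ.IsNClique 3 t →
        ∀ a ∈ t, ∀ b ∈ t, a ∈ A → b ∈ A → a = b := by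
  obtain ⟨n, hn₅, hodd, ⟨φ⟩⟩ := hA
  have hn : 7 ≤ n := by
    obtain rfl | hn : n = 5 ∨ 7 ≤ n := by obtain ⟨k, rfl⟩ := hodd; omega
    · exact absurd ⟨φ⟩ hc5.not_nonempty_compl_cycleGraph_five_iso
    · exact hn
  obtain ⟨w, hw, rfl⟩ := exists_isAntiholeEnum (by omega) φ
  have hZ : (anticompleteSet G w).Nonempty := by
    obtain ⟨t, ht, a, hat, b, hbt, hab, ha, hb⟩ := hco
    obtain ⟨c, -, hc⟩ := hbf.exists_mem_anticompleteSet_of_isNClique hw hn ht hat hbt hab ha hb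
    exact ⟨c, hc⟩
  refine ⟨_, hbf.isHomogeneous_compl hw hn hodd hZ, hw.range_subset_compl (by omega), ?_⟩
  intro t hH ht a hat b hbt ha hb
  by_contra hab
  obtain ⟨c, hct, hc⟩ := hbf.exists_mem_anticompleteSet_of_isNClique hw hn ht hat hbt hab ha hb
  exact hH hct (Or.inl hc)
end

section
/- Let G be a banner-free graph with a homogeneous set H, and let h be any vertex of H. Then G contains no odd hole if and only if both the subgraph of G induced by H and the subgraph of G induced by (V(G) − H) ∪ {h} contain no odd hole. -/
/-!
A hole of length at least five that is not contained in the homogeneous set `H` meets `H` in at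
most one vertex, because a cycle of length at least five has no module other than the empty set,
singletons and the whole cycle. Since no vertex outside `H` distinguishes two vertices of `H`,
that vertex can be replaced by `h`, giving a hole of the same length in `G[(V(G) − H) ∪ {h}]`.
-/

open SimpleGraph

namespace SimpleGraph

variable {V W : Type*} {G : SimpleGraph V} {F : SimpleGraph W}

/-- `IsHomogeneous` without the bounds on the size of the set. -/
def IsModule (G : SimpleGraph V) (S : Set V) : Prop :=
  ∀ v ∉ S, (∀ x ∈ S, G.Adj v x) ∨ (∀ x ∈ S, ¬ G.Adj v x)

namespace IsModule

variable {S : Set V}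

theorem adj_iff (hS : G.IsModule S) {v x y : V} (hv : v ∉ S) (hx : x ∈ S) (hy : y ∈ S) :
    G.Adj v x ↔ G.Adj v y := by
  rcases hS v hv with hall | hnone
  · exact iff_of_true (hall x hx) (hall y hy)
  · exact iff_of_false (hnone x hx) (hnone y hy)

theorem comap (hS : G.IsModule S) (f : F ↪g G) : F.IsModule (f ⁻¹' S) := by
  intro v hv
  simpa only [Set.mem_preimage, f.map_adj_iff] using
    (hS (f v) hv).imp (fun hall x hx => hall (f x) hx) (fun hnone x hx => hnone (f x) hx)

theorem exists_embedding_range_subset (hS : G.IsModule S) {h : V} (hh : h ∈ S) (f : F ↪g G)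
    (hf : (f ⁻¹' S).Subsingleton) : ∃ g : F ↪g G, Set.range g ⊆ Sᶜ ∪ {h} := by
  classical
  let g : W → V := fun i => if f i ∈ S then h else f i
  have g_mem_iff (i : W) : g i ∈ S ↔ f i ∈ S := by
    by_cases hi : f i ∈ S <;> simp [g, hi, hh]
  have adj_iff (i j : W) : G.Adj (g i) (g j) ↔ F.Adj i j := by
    rw [← f.map_adj_iff]
    by_cases hi : f i ∈ S <;> by_cases hj : f j ∈ S
    · obtain rfl := hf hi hj
      simp
    · simp only [g, hi, hj, if_true, if_false, G.adj_comm _ (f j)]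
      exact hS.adj_iff hj hh hi
    · simp only [g, hi, hj, if_true, if_false]
      exact hS.adj_iff hi hh hj
    · simp [g, hi, hj]
  have g_injective : Function.Injective g := by
    intro i j hij
    have hmem : f i ∈ S ↔ f j ∈ S := by rw [← g_mem_iff, hij, g_mem_iff]
    by_cases hi : f i ∈ S
    · exact hf hi (hmem.1 hi)
    · simpa [g, hi, hmem.not.1 hi] using hij
  refine ⟨⟨⟨g, g_injective⟩, adj_iff _ _⟩, ?_⟩
  rintro _ ⟨i, rfl⟩
  by_cases hi : f i ∈ S <;> simp [g, hi]

end IsModule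

open Fin.CommRing in
/-- If `p ∉ S` has a neighbour in `S`, then `S ⊆ {p - 1, p + 1}`; were both in `S`, the vertex
`p + 2 ∉ S` would see `p + 1` but not `p - 1`. -/
theorem isModule_cycleGraph_subsingleton {n : ℕ} (hn : 5 ≤ n) {S : Set (Fin n)}
    (hS : (cycleGraph n).IsModule S) (hS_ne : S ≠ Set.univ) : S.Subsingleton := by
  obtain ⟨m, rfl⟩ : ∃ m, n = m + 5 := ⟨n - 5, by omega⟩
  have nat_ne_zero {k : ℕ} (hk0 : 0 < k) (hk : k < m + 5) : (k : Fin (m + 5)) ≠ 0 := by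
    rw [Ne, Fin.natCast_eq_zero]
    exact fun hdvd => absurd (Nat.le_of_dvd hk0 hdvd) (by omega)
  have mem_nbr {p v : Fin (m + 5)} (h : (cycleGraph (m + 5)).Adj p v) : v = p - 1 ∨ v = p + 1 :=
    (cycleGraph_neighborSet (n := m + 3) ▸ h : v ∈ ({p - 1, p + 1} : Set _))
  intro x hx y hy
  by_contra hxy
  obtain ⟨q, hq⟩ : ∃ q, q ∉ S := by simpa [Set.eq_univ_iff_forall] using hS_ne
  obtain ⟨d, -, hd_fst, hd_snd⟩ :=
    (cycleGraph_preconnected x q).some.exists_boundary_dart S hx hq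
  set p := d.snd
  have hpS : ∀ z ∈ S, (cycleGraph (m + 5)).Adj p z := fun z hz =>
    (hS.adj_iff hd_snd hd_fst hz).1 d.adj.symm
  have hnbrs : p - 1 ∈ S ∧ p + 1 ∈ S := by
    rcases mem_nbr (hpS x hx) with rfl | rfl <;> rcases mem_nbr (hpS y hy) with rfl | rfl <;>
      simp_all
  have hr : p + 2 ∉ S := fun hr => by
    rcases mem_nbr (hpS _ hr) with h | h
    · exact nat_ne_zero (k := 3) (by omega) (by omega) (by push_cast; linear_combination h)
    · exact nat_ne_zero (k := 1) (by omega) (by omega) (by push_cast; linear_combination h)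
  have hr_adj : (cycleGraph (m + 5)).Adj (p + 2) (p - 1) :=
    (hS.adj_iff hr hnbrs.2 hnbrs.1).1 (cycleGraph_adj.2 (Or.inl (by ring)))
  rcases cycleGraph_adj.1 hr_adj with h | h
  · exact nat_ne_zero (k := 2) (by omega) (by omega) (by push_cast; linear_combination h)
  · exact nat_ne_zero (k := 4) (by omega) (by omega) (by push_cast; linear_combination -h)

end SimpleGraph

theorem IsHomogeneous.isModule {V : Type*} {G : SimpleGraph V} {H : Set V}
    (hH : IsHomogeneous G H) : G.IsModule H :=
  hH.2.2

namespace OddHoleFree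

variable {V W : Type*} {G : SimpleGraph V}

theorem of_embedding {F : SimpleGraph W} (e : F ↪g G) (hG : OddHoleFree G) : OddHoleFree F :=
  fun n hn ho ⟨f⟩ => hG n hn ho ⟨e.comp f⟩

theorem not_range_subset {S : Set V} (hS : OddHoleFree (G.induce S)) {n : ℕ} (hn : 5 ≤ n)
    (ho : Odd n) (f : cycleGraph n ↪g G) : ¬ Set.range f ⊆ S :=
  fun hf => hS n hn ho ⟨(G.induceHomOfLE hf).comp f.isoInduceRange.toEmbedding⟩

end OddHoleFree

theorem stmt_11_general {V : Type*} (G : SimpleGraph V)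
    (H : Set V) (hH : IsHomogeneous G H) (h : V) (hh : h ∈ H) :
    OddHoleFree G ↔
      (OddHoleFree (G.induce H) ∧ OddHoleFree (G.induce (Hᶜ ∪ {h}))) := by
  refine ⟨fun hG => ⟨hG.of_embedding (Embedding.induce _), hG.of_embedding (Embedding.induce _)⟩,
    ?_⟩
  rintro ⟨hH_free, hrest_free⟩ n hn ho ⟨f⟩
  by_cases hf_H : Set.range f ⊆ H
  · exact hH_free.not_range_subset hn ho f hf_H
  have hf_sub : (f ⁻¹' H).Subsingleton :=
    isModule_cycleGraph_subsingleton hn (hH.isModule.comap f)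
      (mt Set.preimage_eq_univ_iff.1 hf_H)
  obtain ⟨g, hg⟩ := hH.isModule.exists_embedding_range_subset hh f hf_sub
  exact hrest_free.not_range_subset hn ho g hg

/-- Let `G` be a banner-free graph with a homogeneous set `H` and let `h` be
any vertex of `H`.  Then `G` has no odd hole iff both `G[H]` and `G[(V(G) − H) ∪ {h}]`
have no odd hole. -/
theorem stmt_11 {V : Type*} [Fintype V] (G : SimpleGraph V)
    (hbf : BannerFree G)
    (H : Set V) (hH : IsHomogeneous G H) (h : V) (hh : h ∈ H) :
    OddHoleFree G ↔
      (OddHoleFree (G.induce H) ∧ OddHoleFree (G.induce (Hᶜ ∪ {h}))) :=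
  stmt_11_general G H hH h hh
end

section
/- Let G be a graph with a homogeneous set H, let k = χ(G[H]) be the chromatic number of the subgraph induced by H, and let F be a graph whose vertex set is the disjoint union of V(G) − H and a k-element set K, such that: F induces the same graph as G on V(G) − H, K is a clique of F, and a vertex v ∈ V(G) − H is adjacent in F to the vertices of K if and only if v is adjacent in G to the vertices of H (in which case it is adjacent to all of K, otherwise to none). Then χ(G) = χ(F). -/
open SimpleGraph

/-! A `k`-colouring `D` of `G[H]` turns the substitution of the clique `K` into a graph
homomorphism `G →g F` (send `h ∈ H` to the clique vertex `D h`), so `χ(G) ≤ χ(F)`.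
Conversely, any colouring of `G` uses at least `k` colours on `H`; giving the vertices of `K`
`k` distinct such colours extends the colouring of `G - H` to one of `F`, so `χ(F) ≤ χ(G)`. -/

namespace SimpleGraph

variable {V α : Type*} {G : SimpleGraph V}

theorem Coloring.exists_embedding_mem_image_of_le_chromaticNumber_induce [Finite α]
    (C : G.Coloring α) {S : Set V} {k : ℕ} (hk : (k : ℕ∞) ≤ (G.induce S).chromaticNumber) :
    ∃ f : Fin k ↪ α, ∀ i, f i ∈ C '' S := by
  have : Fintype (C '' S) := Fintype.ofFinite _
  let D : (G.induce S).Coloring (C '' S) :=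
    Coloring.mk (fun v ↦ ⟨C v, Set.mem_image_of_mem C v.2⟩)
      fun hadj heq ↦ C.valid hadj (congrArg Subtype.val heq)
  have hcard : Fintype.card (Fin k) ≤ Fintype.card (C '' S) := by
    simpa using (Nat.cast_le.mp (hk.trans D.colorable.chromaticNumber_le))
  obtain ⟨f⟩ := Function.Embedding.nonempty_of_card_le hcard
  exact ⟨f.trans (Function.Embedding.subtype _), fun i ↦ (f i).2⟩

section CliqueSubstitution

variable {H : Set V} {k : ℕ} {F : SimpleGraph (↥Hᶜ ⊕ Fin k)}

def homToCliqueSubstitution [DecidablePred (· ∈ H)]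
    (hH : ∀ v ∉ H, (∀ h ∈ H, G.Adj v h) ∨ (∀ h ∈ H, ¬ G.Adj v h))
    (hFout : ∀ u v : ↥Hᶜ, G.Adj ↑u ↑v → F.Adj (Sum.inl u) (Sum.inl v))
    (hFK : ∀ i j : Fin k, i ≠ j → F.Adj (Sum.inr i) (Sum.inr j))
    (hFcross : ∀ (v : ↥Hᶜ) (i : Fin k), (∀ h ∈ H, G.Adj ↑v h) → F.Adj (Sum.inl v) (Sum.inr i))
    (D : (G.induce H).Coloring (Fin k)) : G →g F where
  toFun v := if hv : v ∈ H then Sum.inr (D ⟨v, hv⟩) else Sum.inl ⟨v, hv⟩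
  map_rel' {a b} hab := by
    have adj_all {v w : V} (hv : v ∉ H) (hw : w ∈ H) (hvw : G.Adj v w) : ∀ h ∈ H, G.Adj v h :=
      (hH v hv).resolve_right fun hnone ↦ hnone w hw hvw
    by_cases ha : a ∈ H <;> by_cases hb : b ∈ H <;> simp only [ha, hb, dite_true, dite_false]
    · exact hFK _ _ (D.valid (by simpa using hab))
    · exact (hFcross ⟨b, hb⟩ _ (adj_all hb ha hab.symm)).symm
    · exact hFcross ⟨a, ha⟩ _ (adj_all ha hb hab)
    · exact hFout ⟨a, ha⟩ ⟨b, hb⟩ hab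

def Coloring.cliqueSubstitution
    (hFout : ∀ u v : ↥Hᶜ, F.Adj (Sum.inl u) (Sum.inl v) → G.Adj ↑u ↑v)
    (hFK : ∀ i j : Fin k, F.Adj (Sum.inr i) (Sum.inr j) → i ≠ j)
    (hFcross : ∀ (v : ↥Hᶜ) (i : Fin k), F.Adj (Sum.inl v) (Sum.inr i) → ∀ h ∈ H, G.Adj ↑v h)
    (C : G.Coloring α) (f : Fin k ↪ α) (hf : ∀ i, f i ∈ C '' H) : F.Coloring α :=
  Coloring.mk (Sum.elim (fun v ↦ C v) f) <| by
    have cross (v : ↥Hᶜ) (i : Fin k) (hadj : F.Adj (Sum.inl v) (Sum.inr i)) : C v ≠ f i := by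
      obtain ⟨h, hh, hCh⟩ := hf i
      exact hCh ▸ C.valid (hFcross v i hadj h hh)
    rintro (u | i) (v | j) hadj
    · exact C.valid (hFout u v hadj)
    · exact cross u j hadj
    · exact (cross v i hadj.symm).symm
    · exact f.injective.ne (hFK i j hadj)

end CliqueSubstitution

end SimpleGraph

theorem stmt_12_general {V : Type*} (G : SimpleGraph V)
    (H : Set V) (hH : IsHomogeneous G H)
    (k : ℕ) (hk : (G.induce H).chromaticNumber = (k : ℕ∞))
    (F : SimpleGraph (↥(Hᶜ) ⊕ Fin k))
    (hFout : ∀ u v : ↥(Hᶜ), F.Adj (Sum.inl u) (Sum.inl v) ↔ G.Adj ↑u ↑v)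
    (hFK : ∀ i j : Fin k, F.Adj (Sum.inr i) (Sum.inr j) ↔ i ≠ j)
    (hFcross : ∀ (v : ↥(Hᶜ)) (i : Fin k),
      F.Adj (Sum.inl v) (Sum.inr i) ↔ ∀ h ∈ H, G.Adj ↑v h) :
    G.chromaticNumber = F.chromaticNumber := by
  classical
  obtain ⟨D⟩ : (G.induce H).Colorable k := chromaticNumber_le_iff_colorable.mp hk.le
  refine le_antisymm (chromaticNumber_mono_of_hom (homToCliqueSubstitution hH.2.2
    (fun u v ↦ (hFout u v).mpr) (fun i j ↦ (hFK i j).mpr) (fun v i ↦ (hFcross v i).mpr) D)) ?_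
  refine chromaticNumber_le_of_forall_imp fun _ ⟨C⟩ ↦ ?_
  obtain ⟨f, hf⟩ := C.exists_embedding_mem_image_of_le_chromaticNumber_induce hk.ge
  exact ⟨C.cliqueSubstitution (fun u v ↦ (hFout u v).mp) (fun i j ↦ (hFK i j).mp)
    (fun v i ↦ (hFcross v i).mp) f hf⟩

/-- Let `G` be a graph with a homogeneous set `H`, let `k = χ(G[H])`, and let
`F` be the graph obtained from `G` by substituting a clique `K` on `k` vertices for `H`:
the vertex set of `F` is the disjoint union of `V(G) − H` and `K`, `F` agrees with `G` on
`V(G) − H`, `K` is a clique of `F`, and a vertex `v ∈ V(G) − H` is adjacent in `F` to the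
vertices of `K` iff `v` is adjacent in `G` to the vertices of `H`.
Then `χ(G) = χ(F)`. -/
theorem stmt_12 {V : Type*} [Fintype V] (G : SimpleGraph V)
    (H : Set V) (hH : IsHomogeneous G H)
    (k : ℕ) (hk : (G.induce H).chromaticNumber = (k : ℕ∞))
    (F : SimpleGraph (↥(Hᶜ) ⊕ Fin k))
    (hFout : ∀ u v : ↥(Hᶜ), F.Adj (Sum.inl u) (Sum.inl v) ↔ G.Adj ↑u ↑v)
    (hFK : ∀ i j : Fin k, F.Adj (Sum.inr i) (Sum.inr j) ↔ i ≠ j)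
    (hFcross : ∀ (v : ↥(Hᶜ)) (i : Fin k),
      F.Adj (Sum.inl v) (Sum.inr i) ↔ ∀ h ∈ H, G.Adj ↑v h) :
    G.chromaticNumber = F.chromaticNumber :=
  stmt_12_general G H hH k hk F hFout hFK hFcross
end

section
/- Let G be a (banner, odd hole)-free graph with a homogeneous set H, let k be a positive integer, and let F be a graph whose vertex set is the disjoint union of V(G) − H and a k-element set K, such that: F induces the same graph as G on V(G) − H, K is a clique of F, and a vertex v ∈ V(G) − H is adjacent in F to the vertices of K if and only if v is adjacent in G to the vertices of H (in which case it is adjacent to all of K, otherwise to none). Then F is (banner, odd hole)-free. -/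
open SimpleGraph

/-!
Any two vertices of the clique `K` are adjacent and have the same neighbours outside `K`
(true twins). The banner and the holes have no true twins: every edge `xy` has a third vertex
adjacent to exactly one of `x`, `y`. Hence an induced banner or odd hole of `F` meets `K` in at
most one vertex, and replacing that vertex by any vertex of `H` yields an induced copy in `G`.
-/

def TrueTwinFree {W : Type*} (X : SimpleGraph W) : Prop :=
  ∀ ⦃x y⦄, X.Adj x y → ∃ z, z ≠ x ∧ z ≠ y ∧ ¬(X.Adj z x ↔ X.Adj z y)

instance inst_s13 : DecidableRel banner.Adj := fun a b =>
  decidable_of_iff _ (SimpleGraph.fromRel_adj _ a b).symm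

lemma trueTwinFree_banner : TrueTwinFree banner := by
  unfold TrueTwinFree; decide

open Fin.CommRing in
lemma trueTwinFree_cycleGraph {n : ℕ} (hn : 4 ≤ n) : TrueTwinFree (cycleGraph n) := by
  obtain ⟨m, rfl⟩ : ∃ m, n = m + 2 := ⟨n - 2, by omega⟩
  have natCast_ne_zero (a : ℕ) (ha : 0 < a) (ham : a < m + 2) : (a : Fin (m + 2)) ≠ 0 := by
    rw [Ne, Fin.ext_iff, Fin.val_natCast, Nat.mod_eq_of_lt ham]
    simp only [Fin.val_zero]; omega
  have h2 : (2 : Fin (m + 2)) ≠ 0 := by exact_mod_cast natCast_ne_zero 2 (by omega) (by omega)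
  have h3 : (3 : Fin (m + 2)) ≠ 0 := by exact_mod_cast natCast_ne_zero 3 (by omega) (by omega)
  have h21 : (2 : Fin (m + 2)) ≠ 1 := fun h => one_ne_zero (by linear_combination h)
  have hm21 : (-2 : Fin (m + 2)) ≠ 1 := fun h => h3 (by linear_combination -h)
  intro u v huv
  obtain ⟨d, hd, rfl⟩ : ∃ d : Fin (m + 2), (d = 1 ∨ d = -1) ∧ v = u + d := by
    rcases huv with h | h
    · exact ⟨-1, Or.inr rfl, by linear_combination -h⟩
    · exact ⟨1, Or.inl rfl, by linear_combination h⟩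
  refine ⟨u - d, ?_, ?_, ?_⟩
  · rw [Ne, sub_eq_self]
    rcases hd with rfl | rfl <;> simp
  · rw [Ne, sub_eq_iff_eq_add, add_assoc, left_eq_add, ← two_mul]
    rcases hd with rfl | rfl <;> simpa
  · rw [cycleGraph_adj, cycleGraph_adj, show u - d - (u + d) = -(2 * d) by ring,
      show u + d - (u - d) = 2 * d by ring, sub_sub_cancel, show u - d - u = -d by ring]
    rcases hd with rfl | rfl <;> simp [h21, hm21]

/-- A clique that is a homogeneous set, of any size (cf. `IsHomogeneous`). -/
def IsCliqueModule {α : Type*} (F : SimpleGraph α) (K : Set α) : Prop :=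
  F.IsClique K ∧ ∀ w ∉ K, (∀ a ∈ K, F.Adj w a) ∨ (∀ a ∈ K, ¬ F.Adj w a)

lemma TrueTwinFree.eq_of_apply_mem_cliqueModule {W α : Type*} {X : SimpleGraph W}
    {F : SimpleGraph α} (hX : TrueTwinFree X) (f : X ↪g F) {K : Set α}
    (hK : IsCliqueModule F K) {x y : W} (hx : f x ∈ K) (hy : f y ∈ K) : x = y := by
  by_contra hxy
  obtain ⟨z, hzx, hzy, hz⟩ := hX (f.map_rel_iff.mp (hK.1 hx hy (f.injective.ne hxy)))
  rw [← f.map_rel_iff, ← f.map_rel_iff] at hz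
  by_cases hzK : f z ∈ K
  · exact hz (iff_of_true (hK.1 hzK hx (f.injective.ne hzx)) (hK.1 hzK hy (f.injective.ne hzy)))
  · rcases hK.2 _ hzK with hall | hnone
    · exact hz (iff_of_true (hall _ hx) (hall _ hy))
    · exact hz (iff_of_false (hnone _ hx) (hnone _ hy))

section CliqueSubstitution

variable {V : Type*} {G : SimpleGraph V} {H : Set V} {k : ℕ}

/-- `F` arises from `G` by substituting a clique on `Fin k` for `H`. -/
structure IsCliqueSubstitution (G : SimpleGraph V) (H : Set V)
    (F : SimpleGraph (↥(Hᶜ) ⊕ Fin k)) : Prop where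
  adj_inl_inl : ∀ u v : ↥(Hᶜ), F.Adj (Sum.inl u) (Sum.inl v) ↔ G.Adj ↑u ↑v
  adj_inr_inr : ∀ i j : Fin k, F.Adj (Sum.inr i) (Sum.inr j) ↔ i ≠ j
  adj_inl_inr : ∀ (v : ↥(Hᶜ)) (i : Fin k), F.Adj (Sum.inl v) (Sum.inr i) ↔ ∀ h ∈ H, G.Adj ↑v h

variable {F : SimpleGraph (↥(Hᶜ) ⊕ Fin k)}

lemma IsCliqueSubstitution.isCliqueModule_range_inr (hF : IsCliqueSubstitution G H F) :
    IsCliqueModule F (Set.range Sum.inr) := by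
  refine ⟨?_, ?_⟩
  · rintro _ ⟨i, rfl⟩ _ ⟨j, rfl⟩ hij
    exact (hF.adj_inr_inr i j).mpr fun h => hij (congrArg Sum.inr h)
  · rintro (v | i) hv
    · by_cases hvH : ∀ h ∈ H, G.Adj ↑v h
      · exact Or.inl fun _ ⟨i, hi⟩ => hi ▸ (hF.adj_inl_inr v i).mpr hvH
      · exact Or.inr fun _ ⟨i, hi⟩ => hi ▸ mt (hF.adj_inl_inr v i).mp hvH
    · exact absurd ⟨i, rfl⟩ hv

def collapseClique (h₀ : V) : ↥(Hᶜ) ⊕ Fin k → V :=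
  Sum.elim (↑) fun _ => h₀

lemma collapseClique_eq_iff {h₀ : V} (h₀H : h₀ ∈ H) {p q : ↥(Hᶜ) ⊕ Fin k}
    (hpq : p ∉ Set.range Sum.inr ∨ q ∉ Set.range Sum.inr) :
    collapseClique h₀ p = collapseClique h₀ q ↔ p = q := by
  rcases p with u | i <;> rcases q with v | j <;>
    simp only [collapseClique, Sum.elim_inl, Sum.elim_inr, Sum.inl.injEq, reduceCtorEq,
      Subtype.ext_iff.symm]
  · exact iff_of_false (fun h => u.2 (h ▸ h₀H)) id
  · exact iff_of_false (fun h => v.2 (h ▸ h₀H)) id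
  · simp at hpq

lemma IsCliqueSubstitution.adj_collapseClique_iff (hF : IsCliqueSubstitution G H F)
    (hH : ∀ v ∉ H, (∀ h ∈ H, G.Adj v h) ∨ (∀ h ∈ H, ¬ G.Adj v h)) {h₀ : V} (h₀H : h₀ ∈ H)
    {p q : ↥(Hᶜ) ⊕ Fin k} (hpq : p ∉ Set.range Sum.inr ∨ q ∉ Set.range Sum.inr) :
    G.Adj (collapseClique h₀ p) (collapseClique h₀ q) ↔ F.Adj p q := by
  have adj_h₀ (v : ↥(Hᶜ)) : G.Adj ↑v h₀ ↔ ∀ h ∈ H, G.Adj ↑v h :=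
    ⟨fun hv => (hH v v.2).resolve_right fun hnone => hnone h₀ h₀H hv, fun hall => hall h₀ h₀H⟩
  rcases p with u | i <;> rcases q with v | j <;>
    simp only [collapseClique, Sum.elim_inl, Sum.elim_inr]
  · exact (hF.adj_inl_inl u v).symm
  · rw [hF.adj_inl_inr, adj_h₀]
  · rw [G.adj_comm, F.adj_comm, hF.adj_inl_inr, adj_h₀]
  · simp at hpq

lemma IsCliqueSubstitution.nonempty_embedding (hF : IsCliqueSubstitution G H F)
    (hH : IsHomogeneous G H) {W : Type*} {X : SimpleGraph W} (hX : TrueTwinFree X)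
    (f : X ↪g F) : Nonempty (X ↪g G) := by
  obtain ⟨h₀, h₀H⟩ : H.Nonempty := Set.nonempty_of_ncard_ne_zero (by have := hH.1; omega)
  have key (x y : W) : (collapseClique h₀ (f x) = collapseClique h₀ (f y) ↔ x = y) ∧
      (G.Adj (collapseClique h₀ (f x)) (collapseClique h₀ (f y)) ↔ X.Adj x y) := by
    by_cases hxy : f x ∈ Set.range Sum.inr ∧ f y ∈ Set.range Sum.inr
    · obtain rfl := hX.eq_of_apply_mem_cliqueModule f hF.isCliqueModule_range_inr hxy.1 hxy.2
      simp
    · rw [← f.map_rel_iff, ← f.injective.eq_iff, collapseClique_eq_iff h₀H (by tauto),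
        hF.adj_collapseClique_iff hH.2.2 h₀H (by tauto)]
      exact ⟨Iff.rfl, Iff.rfl⟩
  exact ⟨⟨⟨_, fun x y h => (key x y).1.mp h⟩, (key _ _).2⟩⟩

end CliqueSubstitution

theorem stmt_13_general {V : Type*} (G : SimpleGraph V)
    (hbf : BannerFree G) (hohf : OddHoleFree G)
    (H : Set V) (hH : IsHomogeneous G H)
    (k : ℕ)
    (F : SimpleGraph (↥(Hᶜ) ⊕ Fin k))
    (hFout : ∀ u v : ↥(Hᶜ), F.Adj (Sum.inl u) (Sum.inl v) ↔ G.Adj ↑u ↑v)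
    (hFK : ∀ i j : Fin k, F.Adj (Sum.inr i) (Sum.inr j) ↔ i ≠ j)
    (hFcross : ∀ (v : ↥(Hᶜ)) (i : Fin k),
      F.Adj (Sum.inl v) (Sum.inr i) ↔ ∀ h ∈ H, G.Adj ↑v h) :
    BannerFree F ∧ OddHoleFree F := by
  have hF : IsCliqueSubstitution G H F := ⟨hFout, hFK, hFcross⟩
  refine ⟨fun ⟨f⟩ => hbf (hF.nonempty_embedding hH trueTwinFree_banner f), ?_⟩
  rintro n hn hodd ⟨f⟩
  exact hohf n hn hodd (hF.nonempty_embedding hH (trueTwinFree_cycleGraph (by omega)) f)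

/-- Let `G` be a (banner, odd hole)-free graph with a homogeneous set `H`,
let `k` be a positive integer, and let `F` be the graph obtained from `G` by substituting
a clique `K` on `k` vertices for `H`: the vertex set of `F` is the disjoint union of
`V(G) − H` and `K`, `F` agrees with `G` on `V(G) − H`, `K` is a clique of `F`, and a
vertex `v ∈ V(G) − H` is adjacent in `F` to the vertices of `K` iff `v` is adjacent in `G`
to the vertices of `H`.  Then `F` is (banner, odd hole)-free. -/
theorem stmt_13 {V : Type*} [Fintype V] (G : SimpleGraph V)
    (hbf : BannerFree G) (hohf : OddHoleFree G)
    (H : Set V) (hH : IsHomogeneous G H)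
    (k : ℕ) (hk : 0 < k)
    (F : SimpleGraph (↥(Hᶜ) ⊕ Fin k))
    (hFout : ∀ u v : ↥(Hᶜ), F.Adj (Sum.inl u) (Sum.inl v) ↔ G.Adj ↑u ↑v)
    (hFK : ∀ i j : Fin k, F.Adj (Sum.inr i) (Sum.inr j) ↔ i ≠ j)
    (hFcross : ∀ (v : ↥(Hᶜ)) (i : Fin k),
      F.Adj (Sum.inl v) (Sum.inr i) ↔ ∀ h ∈ H, G.Adj ↑v h) :
    BannerFree F ∧ OddHoleFree F :=
  stmt_13_general G hbf hohf H hH k F hFout hFK hFcross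
end

section
/- Let G be a graph whose vertices carry integer weights w, let H be a homogeneous set of G, and let h be any vertex of H. Define a weight function w' on the induced subgraph G' = G[(V(G) − H) ∪ {h}] by w'(x) = w(x) for x ∈ V(G) − H and w'(h) = α_w(G[H]), the maximum total weight of a stable set of the subgraph induced by H. Then α_w(G) = α_{w'}(G'), i.e., the maximum total weight of a stable set of G equals the maximum total w'-weight of a stable set of G'. -/
open SimpleGraph

/-
A stable set of `G` splits into its part outside `H` and its part inside `H`. Since `H` is
homogeneous, a vertex outside `H` that is non-adjacent to one vertex of `H` is non-adjacent to all
of `H`. Hence the part inside `H` can be traded for the single vertex `h` carrying the weight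
`α_w(G[H])`, and conversely `h` can be traded for a maximum-weight stable set of `G[H]`.
-/

namespace SimpleGraph

variable {V : Type*} {G : SimpleGraph V}

theorem isIndepSet_induce_iff {S : Set V} {t : Finset S} :
    (G.induce S).IsIndepSet ↑t ↔ G.IsIndepSet ↑(t.map (Function.Embedding.subtype _)) := by
  rw [Finset.coe_map]
  exact (Subtype.val_injective.injOn.pairwise_image (r := fun v w => ¬G.Adj v w)).symm

end SimpleGraph

section alphaW

variable {V : Type*} {G : SimpleGraph V} {w : V → ℤ} {S : Set V}

theorem alphaW_le {M : ℤ} (hM : ∀ s : Finset V, G.IsIndepSet ↑s → ∑ v ∈ s, w v ≤ M) :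
    alphaW G w ≤ M :=
  csSup_le (by exact ⟨0, ∅, by simp⟩) fun _ ⟨s, hs, hx⟩ => hx ▸ hM s ((isClique_compl G).1 hs)

theorem alphaW_induce_le {M : ℤ}
    (hM : ∀ s : Finset V, G.IsIndepSet ↑s → ↑s ⊆ S → ∑ v ∈ s, w v ≤ M) :
    alphaW (G.induce S) (fun x => w x) ≤ M :=
  alphaW_le fun t ht => by
    simpa using hM _ (isIndepSet_induce_iff.1 ht) (by simp)

variable [Finite V]

variable (G w) in
theorem bddAbove_alphaW_set :
    BddAbove {x : ℤ | ∃ s : Finset V, Gᶜ.IsClique (↑s : Set V) ∧ x = ∑ v ∈ s, w v} := by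
  have := Fintype.ofFinite V
  refine (Set.finite_range fun s : Finset V => ∑ v ∈ s, w v).subset ?_ |>.bddAbove
  rintro x ⟨s, -, rfl⟩
  exact ⟨s, rfl⟩

theorem sum_le_alphaW {s : Finset V} (hs : G.IsIndepSet ↑s) : ∑ v ∈ s, w v ≤ alphaW G w :=
  le_csSup (bddAbove_alphaW_set G w) ⟨s, (isClique_compl G).2 hs, rfl⟩

variable (G w) in
theorem exists_isIndepSet_sum_eq_alphaW :
    ∃ s : Finset V, G.IsIndepSet ↑s ∧ ∑ v ∈ s, w v = alphaW G w := by
  obtain ⟨s, hs, hsum⟩ := Int.csSup_mem (by exact ⟨0, ∅, by simp⟩) (bddAbove_alphaW_set G w)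
  exact ⟨s, (isClique_compl G).1 hs, hsum.symm⟩

theorem sum_le_alphaW_induce {s : Finset V} (hs : G.IsIndepSet ↑s) (hsS : ↑s ⊆ S) :
    ∑ v ∈ s, w v ≤ alphaW (G.induce S) (fun x => w x) := by
  classical
  have hmap := Finset.subtype_map_of_mem (p := (· ∈ S)) fun _ hx => hsS hx
  have hind : (G.induce S).IsIndepSet ↑(s.subtype (· ∈ S)) := by
    rwa [isIndepSet_induce_iff, hmap]
  simpa [Finset.sum_subtype_of_mem _ fun _ hx => hsS hx] using
    sum_le_alphaW (w := fun x : S => w x) hind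

variable (G w S) in
theorem exists_isIndepSet_subset_sum_eq_alphaW_induce :
    ∃ s : Finset V, G.IsIndepSet ↑s ∧ ↑s ⊆ S ∧
      ∑ v ∈ s, w v = alphaW (G.induce S) (fun x => w x) := by
  obtain ⟨t, ht, hsum⟩ := exists_isIndepSet_sum_eq_alphaW (G.induce S) (fun x => w x)
  exact ⟨_, isIndepSet_induce_iff.1 ht, by simp, by simpa using hsum⟩

end alphaW

section Homogeneous

variable {V : Type*} {G : SimpleGraph V} {H : Set V}

theorem IsHomogeneous.isIndepSet_union (hH : IsHomogeneous G H) {A B : Set V}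
    (hA : G.IsIndepSet A) (hB : G.IsIndepSet B) (hAH : Disjoint A H) (hBH : B ⊆ H) {a : V}
    (ha : a ∈ H) (hAa : ∀ x ∈ A, ¬G.Adj x a) : G.IsIndepSet (A ∪ B) := by
  have hAB : ∀ x ∈ A, ∀ y ∈ B, ¬G.Adj x y := fun x hx y hy =>
    (hH.2.2 x (hAH.notMem_of_mem_left hx)).resolve_left (fun hall => hAa x hx (hall a ha))
      y (hBH hy)
  exact Set.pairwise_union.2
    ⟨hA, hB, fun x hx y hy _ => ⟨hAB x hx y hy, fun hyx => hAB x hx y hy hyx.symm⟩⟩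

end Homogeneous

section Collapse

variable {V : Type*} (G : SimpleGraph V) (w : V → ℤ) (H : Set V) (h : V)

open Classical in
noncomputable def collapseWeight : V → ℤ :=
  fun x => if x = h then alphaW (G.induce H) (fun y => w y) else w x

theorem collapseWeight_self : collapseWeight G w H h h = alphaW (G.induce H) (fun y => w y) :=
  if_pos rfl

variable {h} in
theorem collapseWeight_of_ne {x : V} (hx : x ≠ h) : collapseWeight G w H h x = w x :=
  if_neg hx

variable {G H h} [Finite V]

theorem IsHomogeneous.alphaW_le_alphaW_collapse (hH : IsHomogeneous G H) (hh : h ∈ H) :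
    alphaW G w ≤ alphaW (G.induce (Hᶜ ∪ {h})) (fun x => collapseWeight G w H h x) := by
  classical
  refine alphaW_le fun s hs => ?_
  rw [← Finset.sum_filter_add_sum_filter_not s (· ∈ H)]
  set s₀ := s.filter (· ∉ H)
  set s₁ := s.filter (· ∈ H)
  have hs₀ : G.IsIndepSet ↑s₀ := hs.mono (Finset.coe_subset.2 (Finset.filter_subset _ _))
  have hs₀H : Disjoint (↑s₀ : Set V) H :=
    Set.disjoint_left.2 fun x hx => (Finset.mem_filter.1 hx).2
  have hs₀w : ∑ v ∈ s₀, collapseWeight G w H h v = ∑ v ∈ s₀, w v :=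
    Finset.sum_congr rfl fun x hx =>
      collapseWeight_of_ne G w H (ne_of_mem_of_not_mem hh (Finset.mem_filter.1 hx).2).symm
  have hs₁ : ∑ v ∈ s₁, w v ≤ alphaW (G.induce H) (fun y => w y) :=
    sum_le_alphaW_induce (hs.mono (Finset.coe_subset.2 (Finset.filter_subset _ _)))
      fun x hx => (Finset.mem_filter.1 hx).2
  rcases s₁.eq_empty_or_nonempty with hempty | ⟨y, hy⟩
  · rw [hempty, Finset.sum_empty, zero_add, ← hs₀w]
    exact sum_le_alphaW_induce hs₀ fun x hx => Or.inl (hs₀H.notMem_of_mem_left hx)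
  · obtain ⟨hys, hyH⟩ := Finset.mem_filter.1 hy
    have hind : G.IsIndepSet ↑(s₀ ∪ {h}) := by
      rw [Finset.coe_union, Finset.coe_singleton]
      exact hH.isIndepSet_union hs₀ (Set.pairwise_singleton _ _) hs₀H (by simpa) hyH
        fun x hx => hs (Finset.filter_subset _ _ hx) hys
          (ne_of_mem_of_not_mem hyH (Finset.mem_filter.1 hx).2).symm
    calc ∑ v ∈ s₁, w v + ∑ v ∈ s₀, w v
        ≤ alphaW (G.induce H) (fun y => w y) + ∑ v ∈ s₀, collapseWeight G w H h v := by
          rw [hs₀w]; exact add_le_add_left hs₁ _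
      _ = ∑ v ∈ s₀ ∪ {h}, collapseWeight G w H h v := by
          rw [Finset.sum_union (Finset.disjoint_singleton_right.2 fun hh₀ =>
            hs₀H.notMem_of_mem_left hh₀ hh), Finset.sum_singleton, collapseWeight_self, add_comm]
      _ ≤ _ := sum_le_alphaW_induce hind fun x hx => by
          rcases Finset.mem_union.1 hx with hx | hx
          · exact Or.inl (hs₀H.notMem_of_mem_left hx)
          · exact Or.inr (Finset.mem_singleton.1 hx)

theorem IsHomogeneous.alphaW_collapse_le_alphaW (hH : IsHomogeneous G H) (hh : h ∈ H) :
    alphaW (G.induce (Hᶜ ∪ {h})) (fun x => collapseWeight G w H h x) ≤ alphaW G w := by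
  classical
  refine alphaW_induce_le fun s hs hsS => ?_
  have hs₀H : Disjoint (↑(s.erase h) : Set V) H := Set.disjoint_left.2 fun x hx =>
    (hsS (Finset.mem_of_mem_erase hx)).resolve_right (Finset.ne_of_mem_erase hx)
  have hs₀w : ∑ v ∈ s.erase h, collapseWeight G w H h v = ∑ v ∈ s.erase h, w v :=
    Finset.sum_congr rfl fun x hx => collapseWeight_of_ne G w H (Finset.ne_of_mem_erase hx)
  by_cases hhs : h ∈ s
  · obtain ⟨T, hT, hTH, hTw⟩ := exists_isIndepSet_subset_sum_eq_alphaW_induce G w H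
    have hind : G.IsIndepSet ↑(s.erase h ∪ T) := by
      rw [Finset.coe_union]
      exact hH.isIndepSet_union (hs.mono (Finset.coe_subset.2 (Finset.erase_subset _ _))) hT
        hs₀H hTH hh fun x hx => hs (Finset.mem_of_mem_erase hx) hhs (Finset.ne_of_mem_erase hx)
    calc ∑ v ∈ s, collapseWeight G w H h v = ∑ v ∈ s.erase h, w v + ∑ v ∈ T, w v := by
          rw [← Finset.sum_erase_add _ _ hhs, hs₀w, collapseWeight_self, hTw]
      _ = ∑ v ∈ s.erase h ∪ T, w v :=
          (Finset.sum_union (Finset.disjoint_coe.1 (hs₀H.mono_right hTH))).symm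
      _ ≤ alphaW G w := sum_le_alphaW hind
  · rw [← Finset.erase_eq_of_notMem hhs, hs₀w]
    exact sum_le_alphaW (hs.mono (Finset.coe_subset.2 (Finset.erase_subset _ _)))

end Collapse

/-- Let `G` be a graph with integer vertex weights `w`, let `H` be a
homogeneous set of `G`, and let `h ∈ H`.  Let `w'` be the weight function on
`G' = G[(V(G) − H) ∪ {h}]` given by `w'(x) = w(x)` for `x ∈ V(G) − H` and
`w'(h) = α_w(G[H])`.  Then `α_w(G) = α_{w'}(G')`. -/
theorem stmt_14 {V : Type*} [Fintype V] (G : SimpleGraph V) (w : V → ℤ)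
    (H : Set V) (hH : IsHomogeneous G H) (h : V) (hh : h ∈ H)
    (w' : ↥(Hᶜ ∪ {h}) → ℤ)
    (hw'h : ∀ x : ↥(Hᶜ ∪ {h}), (x : V) = h →
      w' x = alphaW (G.induce H) (fun y => w ↑y))
    (hw'x : ∀ x : ↥(Hᶜ ∪ {h}), (x : V) ≠ h → w' x = w ↑x) :
    alphaW G w = alphaW (G.induce (Hᶜ ∪ {h})) w' := by
  have hw' : w' = fun x : ↥(Hᶜ ∪ {h}) => collapseWeight G w H h x := by
    funext x
    by_cases hx : (x : V) = h
    · rw [hw'h x hx, hx, collapseWeight_self]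
    · rw [hw'x x hx, collapseWeight_of_ne G w H hx]
  rw [hw']
  exact le_antisymm (hH.alphaW_le_alphaW_collapse w hh) (hH.alphaW_collapse_le_alphaW w hh)
end

section
/- Let G be a graph with a homogeneous set H, let h be any vertex of H, and let k ≥ 2. If both the subgraph of G induced by H and the subgraph of G induced by (V(G) − H) ∪ {h} are k-divisible, then G is k-divisible. -/
open SimpleGraph

section helpers
variable {V : Type*} {α : Type*}

lemma nclique_transfer (G : SimpleGraph V) (G' : SimpleGraph α) (f : α → V)
    (hf : Function.Injective f) (hadj : ∀ x y, G'.Adj x y ↔ G.Adj (f x) (f y)) (n : ℕ) :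
    (∃ t : Finset α, G'.IsNClique n t) ↔
      (∃ t : Finset V, ↑t ⊆ Set.range f ∧ G.IsNClique n t) := by
  classical
  constructor
  · rintro ⟨t, ht, hcard⟩
    refine ⟨t.map ⟨f, hf⟩, ?_, ?_, by simp [hcard]⟩
    · intro x hx
      simp only [Finset.coe_map, Set.mem_image] at hx
      obtain ⟨u, _, rfl⟩ := hx
      exact Set.mem_range_self _
    · intro x hx y hy hxy
      simp only [Finset.coe_map, Set.mem_image, Function.Embedding.coeFn_mk] at hx hy
      obtain ⟨u, hu, rfl⟩ := hx
      obtain ⟨v, hv, rfl⟩ := hy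
      exact (hadj u v).1 (ht hu hv (fun e => hxy (by rw [e])))
  · rintro ⟨t, hts, ht, hcard⟩
    refine ⟨t.preimage f hf.injOn, ?_, ?_⟩
    · intro x hx y hy hxy
      simp only [Finset.coe_preimage, Set.mem_preimage] at hx hy
      exact (hadj x y).2 (ht hx hy (fun e => hxy (hf e)))
    · rw [← hcard, Finset.card_preimage]
      congr 1
      apply Finset.filter_true_of_mem
      intro x hx
      exact hts hx

lemma cliqueNum_transfer (G : SimpleGraph V) (G' : SimpleGraph α) (f : α → V)
    (hf : Function.Injective f) (hadj : ∀ x y, G'.Adj x y ↔ G.Adj (f x) (f y))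
    (S : Set V) (hrange : Set.range f = S) :
    G'.cliqueNum = (G.induce S).cliqueNum := by
  have h1 := nclique_transfer G G' f hf hadj
  have h2 := nclique_transfer G (G.induce S) (Subtype.val : S → V) Subtype.val_injective
    (fun x y => by simp [comap_adj]) 
  unfold SimpleGraph.cliqueNum
  congr 1
  ext n
  simp only [Set.mem_setOf_eq]
  rw [h1, h2, hrange, Subtype.range_coe]

end helpers

section more
variable {V : Type*} [Fintype V] (G : SimpleGraph V)

lemma exists_max_clique (S : Set V) :
    ∃ t : Finset V, ↑t ⊆ S ∧ G.IsNClique ((G.induce S).cliqueNum) t := by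
  haveI := Fintype.ofFinite ↥S
  have h2 := nclique_transfer G (G.induce S) (Subtype.val : S → V) Subtype.val_injective
    (fun x y => by simp [comap_adj]) ((G.induce S).cliqueNum)
  rw [Subtype.range_coe] at h2
  exact h2.1 (G.induce S).exists_isNClique_cliqueNum

lemma clique_card_le {S : Set V} {t : Finset V} (hts : ↑t ⊆ S) (ht : G.IsClique ↑t) :
    t.card ≤ (G.induce S).cliqueNum := by
  classical
  haveI := Fintype.ofFinite ↥S
  have h2 := nclique_transfer G (G.induce S) (Subtype.val : S → V) Subtype.val_injective
    (fun x y => by simp [comap_adj]) t.card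
  rw [Subtype.range_coe] at h2
  obtain ⟨u, hu⟩ := h2.2 ⟨t, hts, ht, rfl⟩
  exact hu.card_eq ▸ (IsClique.card_le_cliqueNum (tc := hu.isClique))

lemma sub_nclique {t : Finset V} (ht : G.IsClique ↑t) {n : ℕ} (hn : n ≤ t.card) :
    ∃ u : Finset V, ↑u ⊆ (↑t : Set V) ∧ G.IsNClique n u := by
  obtain ⟨u, hut, hcard⟩ := Finset.exists_subset_card_eq (s := t) (n := n) hn
  exact ⟨u, by exact_mod_cast hut, ht.subset (by exact_mod_cast hut), hcard⟩

end more


lemma kdiv_pull {V : Type*} [Fintype V] (G : SimpleGraph V) (W : Set V) {k : ℕ}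
    (hkd : KDivisible (G.induce W) k) (S : Set V) (hSW : S ⊆ W)
    (hedge : ∃ a ∈ S, ∃ b ∈ S, G.Adj a b) :
    ∃ P : Fin k → Set V, (∀ v ∈ S, ∃! i, v ∈ P i) ∧
      ∀ i, P i ⊆ S ∧ ¬ ∃ t : Finset V, ↑t ⊆ P i ∧
        G.IsNClique ((G.induce S).cliqueNum) t := by
  classical
  set S' : Set ↥W := (Subtype.val ⁻¹' S) with hS'def
  have hedge' : ∃ a ∈ S', ∃ b ∈ S', (G.induce W).Adj a b := by
    obtain ⟨a, ha, b, hb, hab⟩ := hedge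
    exact ⟨⟨a, hSW ha⟩, ha, ⟨b, hSW hb⟩, hb, by simpa [comap_adj] using hab⟩
  obtain ⟨P', hPcov, hPprop⟩ := hkd S' hedge'
  have hrange : Set.range (fun x : ↥S' => ((x : ↥W) : V)) = S := by
    ext v
    constructor
    · rintro ⟨⟨⟨w, hw⟩, hw'⟩, rfl⟩
      exact hw'
    · intro hv
      exact ⟨⟨⟨v, hSW hv⟩, hv⟩, rfl⟩
  have hcn : (((G.induce W)).induce S').cliqueNum = (G.induce S).cliqueNum := by
    apply cliqueNum_transfer G _ (fun x : ↥S' => ((x : ↥W) : V))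
    · intro x y hxy
      exact Subtype.ext (Subtype.ext hxy)
    · intro x y
      simp [comap_adj]
    · exact hrange
  refine ⟨fun i => Subtype.val '' (P' i), ?_, ?_⟩
  · intro v hv
    obtain ⟨i, hi, huniq⟩ := hPcov ⟨v, hSW hv⟩ hv
    refine ⟨i, ⟨⟨v, hSW hv⟩, hi, rfl⟩, ?_⟩
    rintro j ⟨x, hx, hxv⟩
    exact huniq j (by rwa [show x = ⟨v, hSW hv⟩ from Subtype.ext hxv] at hx)
  · intro i
    constructor
    · rintro v ⟨x, hx, rfl⟩
      exact (hPprop i).1 hx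
    · rintro ⟨t, hti, htc⟩
      apply (hPprop i).2
      have htW : ∀ v ∈ t, v ∈ W := by
        intro v hv
        obtain ⟨x, _, rfl⟩ := hti hv
        exact x.2
      refine ⟨t.preimage (Subtype.val : ↥W → V) Subtype.val_injective.injOn, ?_, ?_, ?_⟩
      · intro x hx
        simp only [Finset.coe_preimage, Set.mem_preimage] at hx
        obtain ⟨y, hy, hyx⟩ := hti hx
        rwa [show y = x from Subtype.ext hyx] at hy
      · intro x hx y hy hxy
        simp only [Finset.coe_preimage, Set.mem_preimage] at hx hy
        have := htc.isClique hx hy (fun e => hxy (Subtype.ext e))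
        simpa [comap_adj] using this
      · rw [hcn, ← htc.card_eq, Finset.card_preimage]
        congr 1
        apply Finset.filter_true_of_mem
        intro x hx
        exact ⟨⟨x, htW x hx⟩, rfl⟩

/-- Let `G` be a graph with a homogeneous set `H`, let `h` be any vertex of
`H`, and let `k ≥ 2`.  If both `G[H]` and `G[(V(G) − H) ∪ {h}]` are `k`-divisible, then
so is `G`. -/
theorem stmt_15 {V : Type*} [Fintype V] (G : SimpleGraph V)
    (H : Set V) (hH : IsHomogeneous G H) (h : V) (hh : h ∈ H)
    (k : ℕ) (hk : 2 ≤ k)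
    (h1 : KDivisible (G.induce H) k)
    (h2 : KDivisible (G.induce (Hᶜ ∪ {h})) k) :
    KDivisible G k := by
  classical
  obtain ⟨-, -, hom⟩ := hH
  intro S hS
  set A : Set V := S ∩ H with hAdef
  set B : Set V := S \ H with hBdef
  set T : Set V := B ∪ {h} with hTdef
  set ωS := (G.induce S).cliqueNum with hωSdef
  have F1 : ∀ b ∉ H, ∀ a ∈ H, G.Adj b a → ∀ a' ∈ H, G.Adj b a' := by
    intro b hb a ha hba a' ha'
    rcases hom b hb with hc | hn
    · exact hc a' ha'
    · exact absurd hba (hn a ha)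
  have hAH : A ⊆ H := Set.inter_subset_right
  have hAS : A ⊆ S := Set.inter_subset_left
  have hBS : B ⊆ S := Set.diff_subset
  have hTsub : T ⊆ Hᶜ ∪ {h} := by
    rintro x (hx | hx)
    · exact Or.inl hx.2
    · exact Or.inr hx
  have hclpair : 2 ≤ ωS := by
    obtain ⟨a, ha, b, hb, hab⟩ := hS
    have hne : a ≠ b := G.ne_of_adj hab
    have hsub : ↑({a, b} : Finset V) ⊆ S := by
      intro x hx
      simp only [Finset.coe_insert, Finset.coe_singleton, Set.mem_insert_iff,
        Set.mem_singleton_iff] at hx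
      rcases hx with rfl | rfl <;> assumption
    have hcl : G.IsClique ↑({a, b} : Finset V) := by
      intro x hx y hy hxy
      simp only [Finset.coe_insert, Finset.coe_singleton, Set.mem_insert_iff,
        Set.mem_singleton_iff] at hx hy
      rcases hx with rfl | rfl <;> rcases hy with rfl | rfl
      · exact absurd rfl hxy
      · exact hab
      · exact hab.symm
      · exact absurd rfl hxy
    have := clique_card_le G hsub hcl
    rwa [Finset.card_insert_of_notMem (by simpa using hne), Finset.card_singleton] at this
  -- cliques in T are no bigger than ωS, provided A is nonempty
  have hTle : (∃ a, a ∈ A) → (G.induce T).cliqueNum ≤ ωS := by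
    rintro ⟨a, haA⟩
    obtain ⟨t, htT, htc⟩ := exists_max_clique G T
    rw [← htc.card_eq]
    by_cases hht : h ∈ t
    · have herase : ∀ x ∈ t.erase h, x ∈ B := by
        intro x hx
        rcases htT (Finset.mem_coe.mpr (Finset.mem_of_mem_erase hx)) with hxB | hxh
        · exact hxB
        · exact absurd hxh (Finset.ne_of_mem_erase hx)
      have hanotin : a ∉ t.erase h := fun hmem => (herase a hmem).2 (hAH haA)
      have hadjh : ∀ x ∈ t.erase h, G.Adj x h := fun x hx =>
        htc.isClique (Finset.mem_coe.mpr (Finset.mem_of_mem_erase hx))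
          (Finset.mem_coe.mpr hht) (Finset.ne_of_mem_erase hx)
      have hcompl : ∀ x ∈ t.erase h, ∀ a' ∈ H, G.Adj x a' := fun x hx =>
        F1 x (herase x hx).2 h hh (hadjh x hx)
      set t' := insert a (t.erase h) with ht'def
      have hcard : t'.card = t.card := by
        rw [Finset.card_insert_of_notMem hanotin, Finset.card_erase_of_mem hht]
        have : 1 ≤ t.card := Finset.card_pos.mpr ⟨h, hht⟩
        omega
      have ht'S : ↑t' ⊆ S := by
        intro x hx
        simp only [ht'def, Finset.coe_insert, Set.mem_insert_iff, Finset.mem_coe] at hx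
        rcases hx with rfl | hx
        · exact hAS haA
        · exact hBS (herase x hx)
      have ht'c : G.IsClique ↑t' := by
        intro x hx y hy hxy
        simp only [ht'def, Finset.coe_insert, Set.mem_insert_iff, Finset.mem_coe] at hx hy
        rcases hx with rfl | hx <;> rcases hy with rfl | hy
        · exact absurd rfl hxy
        · exact (hcompl y hy x (hAH haA)).symm
        · exact hcompl x hx y (hAH haA)
        · exact htc.isClique (Finset.mem_coe.mpr (Finset.mem_of_mem_erase hx))
            (Finset.mem_coe.mpr (Finset.mem_of_mem_erase hy)) hxy
      have := clique_card_le G ht'S ht'c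
      rwa [hcard] at this
    · have htS : ↑t ⊆ S := by
        intro x hx
        rcases htT hx with hxB | hxh
        · exact hBS hxB
        · exact absurd hxh (by rintro rfl; exact hht (Finset.mem_coe.mp hx))
      exact clique_card_le G htS htc.isClique
  by_cases hAedge : ∃ a ∈ A, ∃ b ∈ A, G.Adj a b
  · -- Case 1 : A contains an edge
    obtain ⟨P, hPcov, hPprop⟩ := kdiv_pull G H h1 A hAH hAedge
    set ωA := (G.induce A).cliqueNum with hωAdef
    have hωAle : ωA ≤ ωS := by
      obtain ⟨L, hLA, hLc⟩ := exists_max_clique G A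
      rw [hωAdef, ← hLc.card_eq]
      exact clique_card_le G (hLA.trans hAS) hLc.isClique
    have hPA : ∀ i, P i ⊆ A := fun i => (hPprop i).1
    have hAne : ∃ a, a ∈ A := by obtain ⟨a, ha, -⟩ := hAedge; exact ⟨a, ha⟩
    by_cases hTedge : ∃ a ∈ T, ∃ b ∈ T, G.Adj a b
    · -- Case 1a : T = B ∪ {h} contains an edge
      obtain ⟨Q, hQcov, hQprop⟩ := kdiv_pull G (Hᶜ ∪ {h}) h2 T hTsub hTedge
      set ωT := (G.induce T).cliqueNum with hωTdef
      have hωTle : ωT ≤ ωS := hTle hAne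
      refine ⟨fun i => P i ∪ (Q i \ {h}), ?_, ?_⟩
      · intro v hv
        by_cases hvH : v ∈ H
        · obtain ⟨i, hi, huniq⟩ := hPcov v ⟨hv, hvH⟩
          refine ⟨i, Or.inl hi, ?_⟩
          rintro j (hj | hj)
          · exact huniq j hj
          · rcases (hQprop j).1 hj.1 with hB | hsing
            · exact absurd hvH hB.2
            · exact absurd hsing hj.2
        · obtain ⟨i, hi, huniq⟩ := hQcov v (Or.inl ⟨hv, hvH⟩)
          have hvh : v ≠ h := by rintro rfl; exact hvH hh
          refine ⟨i, Or.inr ⟨hi, hvh⟩, ?_⟩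
          rintro j (hj | hj)
          · exact absurd (hAH (hPA j hj)) hvH
          · exact huniq j hj.1
      · intro i
        constructor
        · rintro v (hv | hv)
          · exact hAS (hPA i hv)
          · rcases (hQprop i).1 hv.1 with hB | hsing
            · exact hBS hB
            · exact absurd hsing hv.2
        · rintro ⟨t, hti, htc⟩
          set tA := t.filter (· ∈ A) with htAdef
          set tB := t.filter (· ∉ A) with htBdef
          have htA_sub : ↑tA ⊆ P i := by
            intro x hx
            simp only [htAdef, Finset.coe_filter, Set.mem_setOf_eq] at hx
            rcases hti (Finset.mem_coe.mpr hx.1) with hP | hQ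
            · exact hP
            · rcases (hQprop i).1 hQ.1 with hB | hsing
              · exact absurd (hAH hx.2) hB.2
              · exact absurd hsing hQ.2
          have htB_sub : ∀ x ∈ tB, x ∈ Q i \ {h} ∧ x ∈ B := by
            intro x hx
            simp only [htBdef, Finset.mem_filter] at hx
            rcases hti (Finset.mem_coe.mpr hx.1) with hP | hQ
            · exact absurd (hPA i hP) hx.2
            · refine ⟨hQ, ?_⟩
              rcases (hQprop i).1 hQ.1 with hB | hsing
              · exact hB
              · exact absurd hsing hQ.2
          by_cases htBe : tB = ∅
          · -- t lies entirely in P i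
            have htP : ↑t ⊆ P i := by
              intro x hx
              apply htA_sub
              simp only [htAdef, Finset.coe_filter, Set.mem_setOf_eq]
              refine ⟨Finset.mem_coe.mp hx, ?_⟩
              by_contra hxA
              have hmem : x ∈ t.filter (· ∉ A) := Finset.mem_filter.mpr ⟨Finset.mem_coe.mp hx, hxA⟩
              rw [← htBdef, htBe] at hmem
              exact absurd hmem (Finset.notMem_empty x)
            obtain ⟨u, hut, huc⟩ := sub_nclique G htc.isClique
              (htc.card_eq ▸ hωAle)
            exact (hPprop i).2 ⟨u, hut.trans htP, huc⟩
          · obtain ⟨b0, hb0⟩ := Finset.nonempty_of_ne_empty htBe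
            by_cases htAe : tA = ∅
            · -- t lies entirely in Q i
              have htQ : ↑t ⊆ Q i := by
                intro x hx
                have hxB : x ∈ tB := by
                  simp only [htBdef, Finset.mem_filter]
                  refine ⟨Finset.mem_coe.mp hx, ?_⟩
                  intro hxA
                  have hmem : x ∈ t.filter (· ∈ A) := Finset.mem_filter.mpr ⟨Finset.mem_coe.mp hx, hxA⟩
                  rw [← htAdef, htAe] at hmem
                  exact absurd hmem (Finset.notMem_empty x)
                exact (htB_sub x hxB).1.1
              obtain ⟨u, hut, huc⟩ := sub_nclique G htc.isClique
                (htc.card_eq ▸ hωTle)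
              exact (hQprop i).2 ⟨u, hut.trans htQ, huc⟩
            · obtain ⟨a0, ha0⟩ := Finset.nonempty_of_ne_empty htAe
              have ha0t : a0 ∈ t := (Finset.mem_filter.mp ha0).1
              have ha0A : a0 ∈ A := (Finset.mem_filter.mp ha0).2
              -- every vertex of tB is complete to H
              have htBcompl : ∀ x ∈ tB, ∀ a' ∈ H, G.Adj x a' := by
                intro x hx a' ha'
                have hxt : x ∈ t := (Finset.mem_filter.mp hx).1
                have hxB : x ∈ B := (htB_sub x hx).2
                have hxa0 : x ≠ a0 := by rintro rfl; exact (Finset.mem_filter.mp hx).2 ha0A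
                have hadj : G.Adj x a0 := htc.isClique (Finset.mem_coe.mpr hxt)
                  (Finset.mem_coe.mpr ha0t) hxa0
                exact F1 x hxB.2 a0 (hAH ha0A) hadj a' ha'
              obtain ⟨L, hLA, hLc⟩ := exists_max_clique G A
              have hdisj : Disjoint L tB := by
                rw [Finset.disjoint_left]
                intro x hxL hxB
                exact (Finset.mem_filter.mp hxB).2 (hLA (Finset.mem_coe.mpr hxL))
              have hunion_sub : ↑(L ∪ tB) ⊆ S := by
                intro x hx
                rcases Finset.mem_union.mp (Finset.mem_coe.mp hx) with hx | hx
                · exact hAS (hLA (Finset.mem_coe.mpr hx))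
                · exact hBS (htB_sub x hx).2
              have hunion_cl : G.IsClique ↑(L ∪ tB) := by
                intro x hx y hy hxy
                rcases Finset.mem_union.mp (Finset.mem_coe.mp hx) with hx' | hx' <;>
                  rcases Finset.mem_union.mp (Finset.mem_coe.mp hy) with hy' | hy'
                · exact hLc.isClique (Finset.mem_coe.mpr hx') (Finset.mem_coe.mpr hy') hxy
                · exact (htBcompl y hy' x (hAH (hLA (Finset.mem_coe.mpr hx')))).symm
                · exact htBcompl x hx' y (hAH (hLA (Finset.mem_coe.mpr hy')))
                · exact htc.isClique (Finset.mem_coe.mpr (Finset.mem_filter.mp hx').1)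
                    (Finset.mem_coe.mpr (Finset.mem_filter.mp hy').1) hxy
              have hcount : ωA + tB.card ≤ ωS := by
                have := clique_card_le G hunion_sub hunion_cl
                rwa [Finset.card_union_of_disjoint hdisj, hLc.card_eq] at this
              have hsplit : tA.card + tB.card = ωS := by
                rw [← htc.card_eq, htAdef, htBdef]
                exact Finset.card_filter_add_card_filter_not (p := (· ∈ A))
              have hωA_tA : ωA ≤ tA.card := by omega
              have htAcl : G.IsClique ↑tA := htc.isClique.subset (by
                intro x hx
                exact Finset.mem_coe.mpr (Finset.mem_filter.mp (Finset.mem_coe.mp hx)).1)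
              obtain ⟨u, hut, huc⟩ := sub_nclique G htAcl hωA_tA
              exact (hPprop i).2 ⟨u, hut.trans htA_sub, huc⟩
    · -- Case 1b : T = B ∪ {h} has no edge
      push_neg at hTedge
      have hBanti : ∀ x ∈ B, ∀ y ∈ H, ¬ G.Adj x y := by
        intro x hx y hy hadj
        exact hTedge h (Or.inr rfl) x (Or.inl hx)
          (F1 x hx.2 y hy hadj h hh).symm
      have hk0 : (0 : ℕ) < k := by omega
      set i0 : Fin k := ⟨0, hk0⟩ with hi0def
      refine ⟨fun i => if i = i0 then P i ∪ B else P i, ?_, ?_⟩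
      · intro v hv
        by_cases hvH : v ∈ H
        · obtain ⟨i, hi, huniq⟩ := hPcov v ⟨hv, hvH⟩
          refine ⟨i, ?_, ?_⟩
          · by_cases hii : i = i0
            · simp only [if_pos hii]; exact Or.inl hi
            · simp only [if_neg hii]; exact hi
          · intro j hj
            by_cases hjj : j = i0
            · simp only [if_pos hjj] at hj
              rcases hj with hj | hj
              · exact huniq j hj
              · exact absurd hvH hj.2
            · simp only [if_neg hjj] at hj
              exact huniq j hj
        · have hvB : v ∈ B := ⟨hv, hvH⟩
          refine ⟨i0, ?_, ?_⟩
          · simp only [if_pos rfl]; exact Or.inr hvB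
          · intro j hj
            by_cases hjj : j = i0
            · exact hjj
            · simp only [if_neg hjj] at hj
              exact absurd (hAH (hPA j hj)) hvH
      · intro i
        constructor
        · intro v hv
          by_cases hii : i = i0
          · simp only [if_pos hii] at hv
            rcases hv with hv | hv
            · exact hAS (hPA _ hv)
            · exact hBS hv
          · simp only [if_neg hii] at hv
            exact hAS (hPA _ hv)
        · rintro ⟨t, hti, htc⟩
          have hmem : ∀ x ∈ t, x ∈ P i ∨ x ∈ B := by
            intro x hx
            by_cases hii : i = i0
            · simp only [if_pos hii] at hti
              rcases hti (Finset.mem_coe.mpr hx) with h' | h'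
              · exact Or.inl h'
              · exact Or.inr h'
            · simp only [if_neg hii] at hti
              exact Or.inl (hti (Finset.mem_coe.mpr hx))
          have htP : ↑t ⊆ P i := by
            intro x hx
            rcases hmem x (Finset.mem_coe.mp hx) with hx' | hx'
            · exact hx'
            · exfalso
              have hcard2 : 1 < t.card := by rw [htc.card_eq]; omega
              obtain ⟨y, hyt, hyx⟩ := Finset.exists_mem_ne hcard2 x
              have hadj : G.Adj y x := htc.isClique (Finset.mem_coe.mpr hyt) hx hyx
              rcases hmem y hyt with hy' | hy'
              · exact hBanti x hx' y (hAH (hPA _ hy')) hadj.symm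
              · exact hTedge y (Or.inl hy') x (Or.inl hx') hadj
          obtain ⟨u, hut, huc⟩ := sub_nclique G htc.isClique (htc.card_eq ▸ hωAle)
          exact (hPprop i).2 ⟨u, hut.trans htP, huc⟩
  · -- Case 2 : A contains no edge
    by_cases hAne : ∃ a, a ∈ A
    · -- Case 2b : A nonempty, independent
      have hTedge : ∃ a ∈ T, ∃ b ∈ T, G.Adj a b := by
        obtain ⟨a, ha, b, hb, hab⟩ := hS
        by_cases haH : a ∈ H <;> by_cases hbH : b ∈ H
        · exact absurd ⟨a, ⟨ha, haH⟩, b, ⟨hb, hbH⟩, hab⟩ hAedge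
        · exact ⟨b, Or.inl ⟨hb, hbH⟩, h, Or.inr rfl,
            F1 b hbH a haH hab.symm h hh⟩
        · exact ⟨a, Or.inl ⟨ha, haH⟩, h, Or.inr rfl,
            F1 a haH b hbH hab h hh⟩
        · exact ⟨a, Or.inl ⟨ha, haH⟩, b, Or.inl ⟨hb, hbH⟩, hab⟩
      obtain ⟨Q, hQcov, hQprop⟩ := kdiv_pull G (Hᶜ ∪ {h}) h2 T hTsub hTedge
      set ωT := (G.induce T).cliqueNum with hωTdef
      have hωTle : ωT ≤ ωS := hTle hAne
      have hQT : ∀ i, Q i ⊆ T := fun i => (hQprop i).1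
      have hnotinQ : ∀ v ∈ H, ∀ i, v ∉ Q i \ {h} := by
        intro v hv i hvi
        rcases hQT i hvi.1 with hB | hsing
        · exact hB.2 hv
        · exact hvi.2 hsing
      refine ⟨fun i => (Q i \ {h}) ∪ (if h ∈ Q i then A else ∅), ?_, ?_⟩
      · intro v hv
        obtain ⟨j0, hj0, hj0uniq⟩ := hQcov h (Or.inr rfl)
        by_cases hvH : v ∈ H
        · have hvA : v ∈ A := ⟨hv, hvH⟩
          refine ⟨j0, Or.inr (by simp only [if_pos hj0]; exact hvA), ?_⟩
          rintro j (hj | hj)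
          · exact absurd hj (hnotinQ v hvH j)
          · by_cases hhj : h ∈ Q j
            · exact hj0uniq j hhj
            · simp only [if_neg hhj] at hj
              exact absurd hj (Set.notMem_empty v)
        · have hvB : v ∈ B := ⟨hv, hvH⟩
          obtain ⟨i, hi, huniq⟩ := hQcov v (Or.inl hvB)
          have hvh : v ≠ h := by rintro rfl; exact hvH hh
          refine ⟨i, Or.inl ⟨hi, hvh⟩, ?_⟩
          rintro j (hj | hj)
          · exact huniq j hj.1
          · by_cases hhj : h ∈ Q j
            · simp only [if_pos hhj] at hj
              exact absurd (hAH hj) hvH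
            · simp only [if_neg hhj] at hj
              exact absurd hj (Set.notMem_empty v)
      · intro i
        constructor
        · rintro v (hv | hv)
          · have : v ∈ B := by
              rcases hQT i hv.1 with hB | hsing
              · exact hB
              · exact absurd hsing hv.2
            exact hBS this
          · by_cases hhj : h ∈ Q i
            · simp only [if_pos hhj] at hv
              exact hAS hv
            · simp only [if_neg hhj] at hv
              exact absurd hv (Set.notMem_empty v)
        · rintro ⟨t, hti, htc⟩
          have hmem : ∀ x ∈ t, x ∈ Q i \ {h} ∨ (x ∈ A ∧ h ∈ Q i) := by
            intro x hx
            rcases hti (Finset.mem_coe.mpr hx) with h' | h'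
            · exact Or.inl h'
            · by_cases hhj : h ∈ Q i
              · simp only [if_pos hhj] at h'
                exact Or.inr ⟨h', hhj⟩
              · simp only [if_neg hhj] at h'
                exact absurd h' (Set.notMem_empty x)
          by_cases htA : ∃ x ∈ t, x ∈ A
          · obtain ⟨a0, ha0t, ha0A⟩ := htA
            have hhQ : h ∈ Q i := by
              rcases hmem a0 ha0t with h' | h'
              · exact absurd h' (hnotinQ a0 (hAH ha0A) i)
              · exact h'.2
            have hothers : ∀ x ∈ t, x ≠ a0 → x ∈ Q i \ {h} ∧ x ∉ H := by
              intro x hx hxa0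
              rcases hmem x hx with h' | h'
              · refine ⟨h', ?_⟩
                intro hxH
                exact hnotinQ x hxH i h'
              · exfalso
                exact hAedge ⟨x, h'.1, a0, ha0A,
                  htc.isClique (Finset.mem_coe.mpr hx) (Finset.mem_coe.mpr ha0t) hxa0⟩
            set t' := insert h (t.erase a0) with ht'def
            have hhnot : h ∉ t.erase a0 := by
              intro hmem'
              exact (hothers h (Finset.mem_of_mem_erase hmem')
                (Finset.ne_of_mem_erase hmem')).2 hh
            have hcard : t'.card = t.card := by
              rw [Finset.card_insert_of_notMem hhnot, Finset.card_erase_of_mem ha0t]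
              have : 1 ≤ t.card := Finset.card_pos.mpr ⟨a0, ha0t⟩
              omega
            have ht'Q : ↑t' ⊆ Q i := by
              intro x hx
              simp only [ht'def, Finset.coe_insert, Set.mem_insert_iff, Finset.mem_coe] at hx
              rcases hx with rfl | hx
              · exact hhQ
              · exact (hothers x (Finset.mem_of_mem_erase hx) (Finset.ne_of_mem_erase hx)).1.1
            have ht'c : G.IsClique ↑t' := by
              intro x hx y hy hxy
              simp only [ht'def, Finset.coe_insert, Set.mem_insert_iff, Finset.mem_coe] at hx hy
              have key : ∀ z ∈ t.erase a0, G.Adj z h := by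
                intro z hz
                have hz' := hothers z (Finset.mem_of_mem_erase hz) (Finset.ne_of_mem_erase hz)
                have hadj : G.Adj z a0 := htc.isClique
                  (Finset.mem_coe.mpr (Finset.mem_of_mem_erase hz))
                  (Finset.mem_coe.mpr ha0t) (Finset.ne_of_mem_erase hz)
                exact F1 z hz'.2 a0 (hAH ha0A) hadj h hh
              rcases hx with rfl | hx <;> rcases hy with rfl | hy
              · exact absurd rfl hxy
              · exact (key y hy).symm
              · exact key x hx
              · exact htc.isClique (Finset.mem_coe.mpr (Finset.mem_of_mem_erase hx))
                  (Finset.mem_coe.mpr (Finset.mem_of_mem_erase hy)) hxy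
            obtain ⟨u, hut, huc⟩ := sub_nclique G ht'c (n := ωT)
              (by rw [hcard, htc.card_eq]; exact hωTle)
            exact (hQprop i).2 ⟨u, hut.trans ht'Q, huc⟩
          · push_neg at htA
            have htQ : ↑t ⊆ Q i := by
              intro x hx
              rcases hmem x (Finset.mem_coe.mp hx) with h' | h'
              · exact h'.1
              · exact absurd h'.1 (htA x (Finset.mem_coe.mp hx))
            obtain ⟨u, hut, huc⟩ := sub_nclique G htc.isClique (htc.card_eq ▸ hωTle)
            exact (hQprop i).2 ⟨u, hut.trans htQ, huc⟩
    · -- Case 2a : A empty, S ⊆ Hᶜ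
      have hSsub : S ⊆ Hᶜ ∪ {h} := by
        intro x hx
        left
        intro hxH
        exact hAne ⟨x, hx, hxH⟩
      obtain ⟨P, hPcov, hPprop⟩ := kdiv_pull G (Hᶜ ∪ {h}) h2 S hSsub hS
      exact ⟨P, hPcov, hPprop⟩
end

section
/- Let G be a (banner, C5)-free graph with an odd antihole A, and let u be a vertex of G that forms a co-triangle together with some two vertices of A. Then u has no neighbor in A. -/
open SimpleGraph

/-! Number the antihole cyclically as `g 0, g 1, …` (indices modulo `n`), so that `g i` and `g j`
are non-adjacent exactly when `i` and `j` are cyclically consecutive; then `a`, `b` are consecutive,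
say `a = g 0` and `b = g 1`. For `n = 5` the antihole is itself a `C5`, so `n ≥ 7`.

Two anti-edges `{g i, g (i+1)}` and `{g j, g (j+1)}` at cyclic distance at least three span an
induced `C4`, and in a banner-free graph no vertex outside a `C4` sees exactly one of its vertices.
With `{g 0, g 1}` this makes `u` see either all or none of `g 3, …, g (n-2)`. In the first case `u`
lies on an induced `C4` with a pendant antihole vertex near `g 0`; in the second, `u` also misses
`g 2` and `g (n-1)`. -/

open scoped Fin.NatCast

theorem compl_cycleGraph_adj_iff {n : ℕ} {x y : Fin n} :
    (cycleGraph n)ᶜ.Adj x y ↔ 2 ≤ (y - x).val ∧ (y - x).val + 2 ≤ n := by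
  rw [compl_adj, cycleGraph_adj', Ne, Fin.ext_iff]
  rcases le_or_gt x y with h | h
  · rcases h.eq_or_lt with rfl | h'
    · simp [Fin.coe_sub_iff_le.2 le_rfl]
    · rw [Fin.coe_sub_iff_le.2 h, Fin.coe_sub_iff_lt.2 h']
      have := y.isLt
      rw [Fin.lt_def] at h'
      omega
  · rw [Fin.coe_sub_iff_le.2 h.le, Fin.coe_sub_iff_lt.2 h]
    have := x.isLt
    rw [Fin.lt_def] at h
    omega

def cycleGraphFiveIsoCompl : cycleGraph 5 ≃g (cycleGraph 5)ᶜ :=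
  ⟨⟨fun i => 2 * i, fun i => 3 * i, by decide, by decide⟩, by decide⟩

def cycleGraph.rotate {n : ℕ} [NeZero n] (c : Fin n) : cycleGraph n ≃g cycleGraph n where
  toEquiv := Equiv.addLeft c
  map_rel_iff' := by simp [cycleGraph_adj']

def cycleGraph.reflect {n : ℕ} [NeZero n] (c : Fin n) : cycleGraph n ≃g cycleGraph n where
  toEquiv := Equiv.subLeft c
  map_rel_iff' := by simp [cycleGraph_adj', or_comm]

theorem Fin.eq_add_one_of_val_sub_eq_one {n : ℕ} [NeZero n] {x y : Fin n} (h : (y - x).val = 1) :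
    y = x + 1 := by
  rw [← sub_eq_iff_eq_add']
  ext
  rw [h, Fin.val_one', Nat.mod_eq_of_lt (h ▸ (y - x).isLt)]

theorem exists_iso_cycleGraph_zero_one {n : ℕ} [NeZero n] {x y : Fin n}
    (h : (cycleGraph n).Adj x y) : ∃ σ : cycleGraph n ≃g cycleGraph n, σ 0 = x ∧ σ 1 = y := by
  rw [cycleGraph_adj'] at h
  rcases h with h | h
  · refine ⟨cycleGraph.reflect x, sub_zero x, ?_⟩
    show x - 1 = y
    rw [Fin.eq_add_one_of_val_sub_eq_one h, add_sub_cancel_right]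
  · exact ⟨cycleGraph.rotate x, add_zero x, (Fin.eq_add_one_of_val_sub_eq_one h).symm⟩

theorem C5Free.seven_le_of_iso {V : Type*} {G : SimpleGraph V} (hc5 : C5Free G) {A : Set V}
    {n : ℕ} (e : (cycleGraph n)ᶜ ≃g G.induce A) (hn : 5 ≤ n) (hodd : Odd n) : 7 ≤ n := by
  obtain ⟨k, rfl⟩ := hodd
  by_contra h
  obtain rfl : k = 2 := by omega
  exact hc5 ⟨(Embedding.induce A).comp (Iso.toEmbedding (cycleGraphFiveIsoCompl.trans e))⟩

theorem BannerFree.adj_of_induced_cycle4 {V : Type*} {G : SimpleGraph V} (hbf : BannerFree G)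
    {c₀ c₁ c₂ c₃ w : V} (h01 : G.Adj c₀ c₁) (h12 : G.Adj c₁ c₂) (h23 : G.Adj c₂ c₃)
    (h30 : G.Adj c₃ c₀) (h02 : ¬G.Adj c₀ c₂) (h13 : ¬G.Adj c₁ c₃) (hne : c₁ ≠ c₃)
    (hw0 : G.Adj w c₀) (hw1 : ¬G.Adj w c₁) (hw3 : ¬G.Adj w c₃) : G.Adj w c₂ := by
  by_contra hw2
  have hc02 : c₀ ≠ c₂ := by rintro rfl; exact hw2 hw0
  have hwc1 : w ≠ c₁ := by rintro rfl; exact hw2 h12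
  have hwc2 : w ≠ c₂ := by rintro rfl; exact h02 hw0.symm
  have hwc3 : w ≠ c₃ := by rintro rfl; exact hw2 h23.symm
  refine hbf ⟨⟨⟨![c₀, c₁, c₂, c₃, w], fun i j hij => ?_⟩, fun {i j} => ?_⟩⟩
  · fin_cases i <;> fin_cases j <;> simp_all [h01.ne, h12.ne, h23.ne, h30.ne, hw0.ne, eq_comm]
  · change G.Adj (![c₀, c₁, c₂, c₃, w] i) (![c₀, c₁, c₂, c₃, w] j) ↔ banner.Adj i j
    fin_cases i <;> fin_cases j <;> simp_all [banner, G.adj_comm]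

/-- An antihole on `n` vertices, listed as an `n`-periodic sequence so that index arithmetic
stays in `ℕ`. -/
structure IsAntiholeSeq {V : Type*} (G : SimpleGraph V) (n : ℕ) (g : ℕ → V) : Prop where
  periodic : Function.Periodic g n
  adj_iff ⦃i j : ℕ⦄ : i ≤ j → j < i + n → (G.Adj (g i) (g j) ↔ i + 2 ≤ j ∧ j + 2 ≤ i + n)

namespace IsAntiholeSeq

variable {V : Type*} {G : SimpleGraph V} {n : ℕ} {g : ℕ → V}

theorem adj (hg : IsAntiholeSeq G n g) {i j : ℕ} (h₁ : i + 2 ≤ j) (h₂ : j + 2 ≤ i + n) :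
    G.Adj (g i) (g j) :=
  (hg.adj_iff (by omega) (by omega)).2 ⟨h₁, h₂⟩

theorem not_adj_succ (hg : IsAntiholeSeq G n g) (hn : 2 ≤ n) (i : ℕ) :
    ¬G.Adj (g i) (g (i + 1)) := fun h => by
  have := (hg.adj_iff (by omega) (by omega)).1 h
  omega

theorem succ_ne (hg : IsAntiholeSeq G n g) (hn : 4 ≤ n) (i : ℕ) : g (i + 1) ≠ g i := by
  intro h
  have := hg.not_adj_succ (by omega) (i + 1)
  rw [h] at this
  exact this (hg.adj (by omega) (by omega))

section BannerFree

variable (hbf : BannerFree G) (hg : IsAntiholeSeq G n g)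
include hbf hg

/-- `g i, g j, g (i+1), g (j+1)` is an induced `C4`. -/
theorem adj_iff_adj_succ_of_le {i j : ℕ} (hij : i + 3 ≤ j) (hji : j + 3 ≤ i + n) {w : V}
    (hj : ¬G.Adj w (g j)) (hj' : ¬G.Adj w (g (j + 1))) :
    G.Adj w (g i) ↔ G.Adj w (g (i + 1)) := by
  have h₁ : G.Adj (g i) (g j) := hg.adj (by omega) (by omega)
  have h₂ : G.Adj (g (i + 1)) (g j) := hg.adj (by omega) (by omega)
  have h₃ : G.Adj (g (i + 1)) (g (j + 1)) := hg.adj (by omega) (by omega)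
  have h₄ : G.Adj (g i) (g (j + 1)) := hg.adj (by omega) (by omega)
  have h₅ := hg.not_adj_succ (by omega) i
  have h₆ := hg.not_adj_succ (by omega) j
  have h₇ := (hg.succ_ne (by omega) j).symm
  exact ⟨fun hw => hbf.adj_of_induced_cycle4 h₁ h₂.symm h₃ h₄.symm h₅ h₆ h₇ hw hj hj',
    fun hw => hbf.adj_of_induced_cycle4 h₂ h₁.symm h₄ h₃.symm (mt G.adj_symm h₅) h₆ h₇ hw hj hj'⟩

theorem adj_iff_adj_succ {i j : ℕ} (hij : i + 3 ≤ j + n) (hji : j + 3 ≤ i + n)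
    (hne : i + 3 ≤ j ∨ j + 3 ≤ i) {w : V} (hj : ¬G.Adj w (g j)) (hj' : ¬G.Adj w (g (j + 1))) :
    G.Adj w (g i) ↔ G.Adj w (g (i + 1)) := by
  rcases hne with h | h
  · exact adj_iff_adj_succ_of_le hbf hg h hji hj hj'
  · rw [← hg.periodic j] at hj
    rw [← hg.periodic (j + 1), add_right_comm] at hj'
    exact adj_iff_adj_succ_of_le hbf hg hij (by omega) hj hj'

/-- Otherwise `g (i+2)` would be a pendant vertex of the induced `C4` `g i, u, g (i+1), g (i+3)`. -/
theorem adj_add_two (hn : 5 ≤ n) {i : ℕ} {u : V} (hu : u ≠ g (i + 3)) (h₀ : G.Adj u (g i))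
    (h₁ : G.Adj u (g (i + 1))) (h₃ : ¬G.Adj u (g (i + 3))) : G.Adj u (g (i + 2)) := by
  by_contra h₂
  refine hg.not_adj_succ (by omega) (i + 1) (G.adj_symm ?_)
  exact hbf.adj_of_induced_cycle4 h₀.symm h₁ (hg.adj (by omega) (by omega))
    (hg.adj (by omega) (by omega)).symm (hg.not_adj_succ (by omega) i) h₃ hu
    (hg.adj (by omega) (by omega)).symm (mt G.adj_symm h₂) (hg.not_adj_succ (by omega) (i + 2))

variable {u : V} (h₀ : ¬G.Adj u (g 0)) (h₁ : ¬G.Adj u (g 1))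
include h₀ h₁

theorem adj_iff_adj_three {k : ℕ} (hk₃ : 3 ≤ k) (hkn : k + 2 ≤ n) :
    G.Adj u (g k) ↔ G.Adj u (g 3) := by
  induction k, hk₃ using Nat.le_induction with
  | base => rfl
  | succ k hk ih =>
    rw [← ih (by omega)]
    exact (adj_iff_adj_succ hbf hg (by omega) (by omega) (Or.inr hk) h₀ h₁).symm

theorem not_adj_three (hn : 7 ≤ n) (hu₀ : u ≠ g 0) (hu₁ : u ≠ g 1) : ¬G.Adj u (g 3) := by
  intro h₃
  have hmid {k : ℕ} (hk₃ : 3 ≤ k) (hkn : k + 2 ≤ n) : G.Adj u (g k) :=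
    (adj_iff_adj_three hbf hg h₀ h₁ hk₃ hkn).2 h₃
  obtain ⟨m, rfl⟩ : ∃ m, n = m + 4 := ⟨n - 4, by omega⟩
  have hg₀ : g (m + 4) = g 0 := by rw [← hg.periodic 0, zero_add]
  have hg₁ : g (m + 5) = g 1 := by rw [← hg.periodic 1, add_left_comm]
  have hlast : G.Adj u (g (m + 3)) :=
    adj_add_two hbf hg (by omega) (i := m + 1) (hg₀ ▸ hu₀) (hmid (by omega) (by omega))
      (hmid (by omega) (by omega)) (hg₀ ▸ h₀)
  exact h₀ (hg₀ ▸ adj_add_two hbf hg (by omega) (i := m + 2) (hg₁ ▸ hu₁)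
    (hmid (by omega) (by omega)) hlast (hg₁ ▸ h₁))

theorem not_adj_of_not_adj_zero_one (hn : 7 ≤ n) (hu₀ : u ≠ g 0) (hu₁ : u ≠ g 1) (k : ℕ) :
    ¬G.Adj u (g k) := by
  have hmid {k : ℕ} (hk₃ : 3 ≤ k) (hkn : k + 2 ≤ n) : ¬G.Adj u (g k) :=
    mt (adj_iff_adj_three hbf hg h₀ h₁ hk₃ hkn).1 (not_adj_three hbf hg h₀ h₁ hn hu₀ hu₁)
  obtain ⟨m, rfl⟩ : ∃ m, n = m + 4 := ⟨n - 4, by omega⟩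
  have h₂ : ¬G.Adj u (g 2) :=
    (adj_iff_adj_succ hbf hg (i := 1) (j := 4) (by omega) (by omega) (by omega)
      (hmid (by omega) (by omega)) (hmid (by omega) (by omega))).not.1 h₁
  have hlast : ¬G.Adj u (g (m + 3)) :=
    (adj_iff_adj_succ hbf hg (i := m + 2) (j := 1) (by omega) (by omega) (by omega)
      h₁ h₂).not.1 (hmid (by omega) (by omega))
  rw [← hg.periodic.map_mod_nat k]
  have hk : k % (m + 4) < m + 4 := Nat.mod_lt k (by omega)
  generalize k % (m + 4) = r at hk
  obtain rfl | rfl | rfl | hr | rfl :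
      r = 0 ∨ r = 1 ∨ r = 2 ∨ (3 ≤ r ∧ r + 2 ≤ m + 4) ∨ r = m + 3 := by omega
  exacts [h₀, h₁, h₂, hmid hr.1 hr.2, hlast]

end BannerFree

end IsAntiholeSeq

theorem isAntiholeSeq_of_embedding {V : Type*} {G : SimpleGraph V} {n : ℕ} [NeZero n]
    (f : (cycleGraph n)ᶜ ↪g G) : IsAntiholeSeq G n (fun k : ℕ => f k) where
  periodic k := by simp
  adj_iff i j hij hji := by
    obtain ⟨d, rfl⟩ := Nat.exists_eq_add_of_le hij
    rw [f.map_adj_iff, compl_cycleGraph_adj_iff, Nat.cast_add, add_sub_cancel_left,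
      Fin.val_cast_of_lt (by omega)]
    omega

theorem exists_isAntiholeSeq_of_iso {V : Type*} {G : SimpleGraph V} {n : ℕ} [NeZero n] {A : Set V}
    (e : (cycleGraph n)ᶜ ≃g G.induce A) {a b : V} (ha : a ∈ A) (hb : b ∈ A) (hab : a ≠ b)
    (hnab : ¬G.Adj a b) :
    ∃ g : ℕ → V, IsAntiholeSeq G n g ∧ g 0 = a ∧ g 1 = b ∧ ∀ x ∈ A, ∃ k, g k = x := by
  set x := e.symm ⟨a, ha⟩
  set y := e.symm ⟨b, hb⟩
  have hxy : (cycleGraph n).Adj x y := by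
    by_contra h
    have : x ≠ y := by simpa [x, y] using hab
    exact hnab (by simpa [x, y] using e.symm.map_adj_iff.1 ((compl_adj _ _ _).2 ⟨this, h⟩))
  obtain ⟨σ, hσ₀, hσ₁⟩ := exists_iso_cycleGraph_zero_one hxy
  let f : (cycleGraph n)ᶜ ↪g G :=
    (Embedding.induce A).comp (e.toEmbedding.comp (Embedding.complEquiv σ.toEmbedding))
  refine ⟨fun k => f k, isAntiholeSeq_of_embedding f, ?_, ?_,
    fun z hz => ⟨(σ.symm (e.symm ⟨z, hz⟩)).val, ?_⟩⟩
  · change (e (σ ((0 : ℕ) : Fin n)) : V) = a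
    simp [hσ₀, x]
  · change (e (σ ((1 : ℕ) : Fin n)) : V) = b
    simp [hσ₁, y]
  · change (e (σ (((σ.symm (e.symm ⟨z, hz⟩)).val : ℕ) : Fin n)) : V) = z
    simp

theorem stmt_16_general {V : Type*} (G : SimpleGraph V)
    (hbf : BannerFree G) (hc5 : C5Free G)
    (A : Set V) (hA : IsOddAntihole G A)
    (u a b : V) (ha : a ∈ A) (hb : b ∈ A) (hab : a ≠ b) (hua : u ≠ a) (hub : u ≠ b)
    (hnua : ¬ G.Adj u a) (hnub : ¬ G.Adj u b) (hnab : ¬ G.Adj a b) :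
    ∀ x ∈ A, ¬ G.Adj u x := by
  obtain ⟨n, hn5, hodd, ⟨e⟩⟩ := hA
  have hn7 : 7 ≤ n := hc5.seven_le_of_iso e hn5 hodd
  have : NeZero n := ⟨by omega⟩
  obtain ⟨g, hg, rfl, rfl, hgA⟩ := exists_isAntiholeSeq_of_iso e ha hb hab hnab
  intro x hx
  obtain ⟨k, rfl⟩ := hgA x hx
  exact hg.not_adj_of_not_adj_zero_one hbf hnua hnub hn7 hua hub k

/-- Let `G` be a (banner, C5)-free graph with an odd antihole `A`, and let
`u` be a vertex forming a co-triangle together with two vertices `a, b` of `A`.  Then `u`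
has no neighbour in `A`. -/
theorem stmt_16 {V : Type*} [Fintype V] (G : SimpleGraph V)
    (hbf : BannerFree G) (hc5 : C5Free G)
    (A : Set V) (hA : IsOddAntihole G A)
    (u a b : V) (ha : a ∈ A) (hb : b ∈ A) (hab : a ≠ b) (hua : u ≠ a) (hub : u ≠ b)
    (hnua : ¬ G.Adj u a) (hnub : ¬ G.Adj u b) (hnab : ¬ G.Adj a b) :
    ∀ x ∈ A, ¬ G.Adj u x :=
  stmt_16_general G hbf hc5 A hA u a b ha hb hab hua hub hnua hnub hnab
end

section
/- Let G be a (banner, C5)-free graph with an odd antihole A such that no co-triangle of G contains two vertices of A. Then no vertex of A belongs to a co-triangle of G. -/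
open SimpleGraph

/- ===================== auxiliary lemmas ===================== -/

lemma banner_emb {V : Type*} {G : SimpleGraph V} {v0 v1 v2 v3 v4 : V}
    (h01 : G.Adj v0 v1) (h12 : G.Adj v1 v2) (h23 : G.Adj v2 v3) (h03 : G.Adj v0 v3)
    (h04 : G.Adj v0 v4)
    (n02 : ¬G.Adj v0 v2) (n13 : ¬G.Adj v1 v3) (n14 : ¬G.Adj v1 v4)
    (n24 : ¬G.Adj v2 v4) (n34 : ¬G.Adj v3 v4)
    (d02 : v0 ≠ v2) (d13 : v1 ≠ v3) (d14 : v1 ≠ v4) (d24 : v2 ≠ v4) (d34 : v3 ≠ v4) :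
    Nonempty (banner ↪g G) := by
  have d01 := h01.ne; have d12 := h12.ne; have d23 := h23.ne
  have d03 := h03.ne; have d04 := h04.ne
  refine ⟨⟨⟨![v0, v1, v2, v3, v4], ?_⟩, ?_⟩⟩
  · intro i j hij
    fin_cases i <;> fin_cases j <;> simp_all
  · intro i j
    fin_cases i <;> fin_cases j <;>
      simp only [banner, SimpleGraph.fromRel_adj, Function.Embedding.coeFn_mk] <;>
      simp <;>
      first
        | exact G.irrefl
        | exact h01 | exact h01.symm | exact h12 | exact h12.symm
        | exact h23 | exact h23.symm | exact h03 | exact h03.symm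
        | exact h04 | exact h04.symm
        | exact n02 | exact fun h => n02 h.symm
        | exact n13 | exact fun h => n13 h.symm
        | exact n14 | exact fun h => n14 h.symm
        | exact n24 | exact fun h => n24 h.symm
        | exact n34 | exact fun h => n34 h.symm

lemma c5_emb {V : Type*} {G : SimpleGraph V} {v0 v1 v2 v3 v4 : V}
    (h01 : G.Adj v0 v1) (h12 : G.Adj v1 v2) (h23 : G.Adj v2 v3) (h34 : G.Adj v3 v4)
    (h04 : G.Adj v0 v4)
    (n02 : ¬G.Adj v0 v2) (n03 : ¬G.Adj v0 v3) (n13 : ¬G.Adj v1 v3) (n14 : ¬G.Adj v1 v4)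
    (n24 : ¬G.Adj v2 v4)
    (d02 : v0 ≠ v2) (d03 : v0 ≠ v3) (d13 : v1 ≠ v3) (d14 : v1 ≠ v4) (d24 : v2 ≠ v4) :
    Nonempty (SimpleGraph.cycleGraph 5 ↪g G) := by
  have d01 := h01.ne; have d12 := h12.ne; have d23 := h23.ne
  have d34 := h34.ne; have d04 := h04.ne
  refine ⟨⟨⟨![v0, v1, v2, v3, v4], ?_⟩, ?_⟩⟩
  · intro i j hij
    fin_cases i <;> fin_cases j <;> simp_all
  · intro i j
    fin_cases i <;> fin_cases j <;>
      simp only [Function.Embedding.coeFn_mk] <;> simp <;>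
      first
        | exact G.irrefl
        | exact h01 | exact h01.symm | exact h12 | exact h12.symm
        | exact h23 | exact h23.symm | exact h34 | exact h34.symm
        | exact h04 | exact h04.symm
        | exact n02 | exact fun h => n02 h.symm
        | exact n03 | exact fun h => n03 h.symm
        | exact n13 | exact fun h => n13 h.symm
        | exact n14 | exact fun h => n14 h.symm
        | exact n24 | exact fun h => n24 h.symm
        | exact iff_of_true h01 (by decide) | exact iff_of_true h01.symm (by decide)
        | exact iff_of_true h12 (by decide) | exact iff_of_true h12.symm (by decide)
        | exact iff_of_true h23 (by decide) | exact iff_of_true h23.symm (by decide)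
        | exact iff_of_true h34 (by decide) | exact iff_of_true h34.symm (by decide)
        | exact iff_of_true h04 (by decide) | exact iff_of_true h04.symm (by decide)
        | exact iff_of_false n02 (by decide) | exact iff_of_false (fun h => n02 h.symm) (by decide)
        | exact iff_of_false n03 (by decide) | exact iff_of_false (fun h => n03 h.symm) (by decide)
        | exact iff_of_false n13 (by decide) | exact iff_of_false (fun h => n13 h.symm) (by decide)
        | exact iff_of_false n14 (by decide) | exact iff_of_false (fun h => n14 h.symm) (by decide)
        | exact iff_of_false n24 (by decide) | exact iff_of_false (fun h => n24 h.symm) (by decide)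

lemma cotri {V : Type*} [DecidableEq V] {G : SimpleGraph V} {u v w : V} (huv : u ≠ v) (huw : u ≠ w) (hvw : v ≠ w)
    (h1 : ¬G.Adj u v) (h2 : ¬G.Adj u w) (h3 : ¬G.Adj v w) :
    Gᶜ.IsNClique 3 ({u, v, w} : Finset V) := by
  constructor
  · intro p hp r hr hpr
    simp only [Finset.coe_insert, Set.mem_insert_iff, Finset.coe_singleton,
      Set.mem_singleton_iff] at hp hr
    rw [SimpleGraph.compl_adj]
    rcases hp with rfl | rfl | rfl <;> rcases hr with rfl | rfl | rfl <;>
      first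
        | exact absurd rfl hpr
        | exact ⟨hpr, by assumption⟩
        | exact ⟨hpr, fun h => h1 h.symm⟩
        | exact ⟨hpr, fun h => h2 h.symm⟩
        | exact ⟨hpr, fun h => h3 h.symm⟩
  · exact Finset.card_eq_three.mpr ⟨u, v, w, huv, huw, hvw, rfl⟩

lemma lemMixed {V : Type*} {G : SimpleGraph V} (hbf : BannerFree G)
    {q : ℤ} (hq : 7 ≤ q) {b : ℤ → V} {x y : V}
    (hne : ∀ k l : ℤ, 0 < k - l → k - l < q → b k ≠ b l)
    (hadj : ∀ k l : ℤ, 2 ≤ k - l → k - l ≤ q - 2 → G.Adj (b k) (b l))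
    (hnadj : ∀ k l : ℤ, k - l = 1 → ¬ G.Adj (b k) (b l))
    (hxb : ∀ k, x ≠ b k) (hyb : ∀ k, y ≠ b k)
    (hxy : ¬ G.Adj x y) (hxyne : x ≠ y)
    (hxm1 : G.Adj x (b (-1))) (hym1 : G.Adj y (b (-1)))
    (hx0 : ¬ G.Adj x (b 0)) (hy0 : ¬ G.Adj y (b 0))
    (hx2 : ¬ G.Adj x (b 2)) (hy2 : ¬ G.Adj y (b 2))
    (hmix : G.Adj x (b (-2)) ∨ G.Adj y (b (-2))) : False := by
  by_cases hxm2 : G.Adj x (b (-2))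
  · by_cases hym2 : G.Adj y (b (-2))
    · -- banner (b (-2), x, b (-1), y, b 0)
      exact hbf (banner_emb hxm2.symm hxm1 hym1.symm hym2.symm
        (hadj 0 (-2) (by norm_num) (by omega)).symm
        (fun h => hnadj (-1) (-2) (by norm_num) h.symm) hxy hx0
        (fun h => hnadj 0 (-1) (by norm_num) h.symm) hy0
        (hne (-1) (-2) (by norm_num) (by omega)).symm hxyne (hxb 0)
        (hne 0 (-1) (by norm_num) (by omega)).symm (hyb 0))
    · -- banner (b (-1), x, b (-2), b 2, y)
      exact hbf (banner_emb hxm1.symm hxm2 (hadj 2 (-2) (by norm_num) (by omega)).symm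
        (hadj 2 (-1) (by norm_num) (by omega)).symm hym1.symm
        (hnadj (-1) (-2) (by norm_num)) hx2 hxy (fun h => hym2 h.symm) (fun h => hy2 h.symm)
        (hne (-1) (-2) (by norm_num) (by omega)) (hxb 2) hxyne ((hyb (-2)).symm) ((hyb 2).symm))
  · have hym2 : G.Adj y (b (-2)) := hmix.resolve_left hxm2
    -- banner (b (-1), y, b (-2), b 2, x)
    exact hbf (banner_emb hym1.symm hym2 (hadj 2 (-2) (by norm_num) (by omega)).symm
      (hadj 2 (-1) (by norm_num) (by omega)).symm hxm1.symm
      (hnadj (-1) (-2) (by norm_num)) hy2 (fun h => hxy h.symm) (fun h => hxm2 h.symm)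
      (fun h => hx2 h.symm)
      (hne (-1) (-2) (by norm_num) (by omega)) (hyb 2) hxyne.symm ((hxb (-2)).symm) ((hxb 2).symm))

lemma branch2 {V : Type*} {G : SimpleGraph V} (hbf : BannerFree G) (hc5 : C5Free G)
    {q : ℤ} (hq : 7 ≤ q) (hodd : Odd q) {b : ℤ → V} {x y : V}
    (hper : ∀ k, b (k + q) = b k)
    (hne : ∀ k l : ℤ, 0 < k - l → k - l < q → b k ≠ b l)
    (hadj : ∀ k l : ℤ, 2 ≤ k - l → k - l ≤ q - 2 → G.Adj (b k) (b l))
    (hnadj : ∀ k l : ℤ, k - l = 1 → ¬ G.Adj (b k) (b l))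
    (hxb : ∀ k, x ≠ b k) (hyb : ∀ k, y ≠ b k)
    (hxy : ¬ G.Adj x y) (hxyne : x ≠ y)
    (hxind : ∀ k : ℤ, G.Adj x (b k) ∨ G.Adj x (b (k + 1)))
    (hyind : ∀ k : ℤ, G.Adj y (b k) ∨ G.Adj y (b (k + 1)))
    (hx0 : ¬ G.Adj x (b 0)) (hy0 : ¬ G.Adj y (b 0))
    (hx2 : ¬ G.Adj x (b 2)) : False := by
  have hxc : ∀ k : ℤ, ¬ G.Adj x (b k) → G.Adj x (b (k + 1)) :=
    fun k h => (hxind k).resolve_left h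
  have hyc : ∀ k : ℤ, ¬ G.Adj y (b k) → G.Adj y (b (k + 1)) :=
    fun k h => (hyind k).resolve_left h
  have hxm1 : G.Adj x (b (-1)) := by
    by_contra h
    have := hxc (-1) h; norm_num at this; exact hx0 this
  have hym1 : G.Adj y (b (-1)) := by
    by_contra h
    have := hyc (-1) h; norm_num at this; exact hy0 this
  have hx3 : G.Adj x (b 3) := by have := hxc 2 hx2; norm_num at this; exact this
  by_cases hy2 : G.Adj y (b 2)
  · by_cases hy3 : G.Adj y (b 3)
    · -- banner (b 3, y, b 2, b 0, x)
      exact hbf (banner_emb hy3.symm hy2 (hadj 2 0 (by norm_num) (by omega))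
        (hadj 3 0 (by norm_num) (by omega)) hx3.symm
        (hnadj 3 2 (by norm_num)) hy0 (fun h => hxy h.symm) (fun h => hx2 h.symm)
        (fun h => hx0 h.symm)
        (hne 3 2 (by norm_num) (by omega)) (hyb 0) hxyne.symm ((hxb 2).symm) ((hxb 0).symm))
    · -- C5 (y, b 1, b 3, b 0, b 2)
      have hy1 : G.Adj y (b 1) := by have := hyc 0 hy0; norm_num at this; exact this
      exact hc5 (c5_emb hy1 (hadj 3 1 (by norm_num) (by omega)).symm
        (hadj 3 0 (by norm_num) (by omega)) (hadj 2 0 (by norm_num) (by omega)).symm hy2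
        hy3 hy0 (hnadj 1 0 (by norm_num)) (fun h => hnadj 2 1 (by norm_num) h.symm)
        (hnadj 3 2 (by norm_num))
        (hyb 3) (hyb 0) (hne 1 0 (by norm_num) (by omega))
        ((hne 2 1 (by norm_num) (by omega)).symm) (hne 3 2 (by norm_num) (by omega)))
  · -- 2 is a common non-neighbour of x and y : wrap argument
    set P : ℤ → Prop := fun s => ¬ G.Adj x (b s) ∧ ¬ G.Adj y (b s) with hP
    have hP0 : P 0 := ⟨hx0, hy0⟩
    have hP2 : P 2 := ⟨hx2, hy2⟩
    have hgood : ∃ s : ℤ, P (s - 2) ∧ P s ∧ (G.Adj x (b (s + 2)) ∨ G.Adj y (b (s + 2))) := by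
      by_contra hall
      push_neg at hall
      have hstep : ∀ s : ℤ, P (s - 2) → P s → P (s + 2) := by
        intro s h1 h2
        rcases hall s h1 h2 with ⟨hx', hy'⟩
        exact ⟨hx', hy'⟩
      have hQ : ∀ s : ℕ, P (2 * (s : ℤ)) ∧ P (2 * (s : ℤ) + 2) := by
        intro s
        induction s with
        | zero => exact ⟨by simpa using hP0, by norm_num; exact hP2⟩
        | succ s ih =>
          have e1 : (2 * ((s : ℤ) + 1)) = 2 * s + 2 := by ring
          have e2 : (2 * ((s : ℤ) + 1) + 2) = (2 * s + 2) + 2 := by ring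
          have h3 : P ((2 * (s : ℤ) + 2) + 2) := by
            apply hstep
            · have e3 : (2 * (s : ℤ) + 2) - 2 = 2 * s := by ring
              rw [e3]; exact ih.1
            · exact ih.2
          constructor
          · push_cast; rw [e1]; exact ih.2
          · push_cast; rw [e2]; exact h3
      obtain ⟨r, hr⟩ := hodd
      have hr3 : 3 ≤ r := by omega
      have hs : (2 * (((r + 1).toNat : ℕ) : ℤ)) = q + 1 := by omega
      have hq1 : P (q + 1) := by
        have := (hQ (r + 1).toNat).1
        rwa [hs] at this
      have hb1 : b (q + 1) = b 1 := by
        have := hper 1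
        rwa [show (1 : ℤ) + q = q + 1 by ring] at this
      simp only [hP] at hq1
      rw [hb1] at hq1
      rcases hxind 0 with h | h
      · exact hx0 h
      · norm_num at h
        exact hq1.1 h
    obtain ⟨s, hs2, hs0, hsmix⟩ := hgood
    have hxm1' : G.Adj x (b (s + 1)) := hxc s hs0.1
    have hym1' : G.Adj y (b (s + 1)) := hyc s hs0.2
    exact lemMixed hbf hq (b := fun k => b (s - k)) (x := x) (y := y)
      (fun k l h1 h2 => ((hne (s - l) (s - k) (by omega) (by omega)).symm))
      (fun k l h1 h2 => (hadj (s - l) (s - k) (by omega) (by omega)).symm)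
      (fun k l h1 h => hnadj (s - l) (s - k) (by omega) h.symm)
      (fun k => hxb (s - k)) (fun k => hyb (s - k)) hxy hxyne
      (by show G.Adj x (b (s - (-1))); rw [show s - (-1) = s + 1 by ring]; exact hxm1')
      (by show G.Adj y (b (s - (-1))); rw [show s - (-1) = s + 1 by ring]; exact hym1')
      (by show ¬ G.Adj x (b (s - 0)); rw [show s - 0 = s by ring]; exact hs0.1)
      (by show ¬ G.Adj y (b (s - 0)); rw [show s - 0 = s by ring]; exact hs0.2)
      (by show ¬ G.Adj x (b (s - 2)); exact hs2.1)
      (by show ¬ G.Adj y (b (s - 2)); exact hs2.2)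
      (by show G.Adj x (b (s - (-2))) ∨ G.Adj y (b (s - (-2)));
          rw [show s - (-2) = s + 2 by ring]; exact hsmix)

lemma core7 {V : Type*} {G : SimpleGraph V} (hbf : BannerFree G) (hc5 : C5Free G)
    {q : ℤ} (hq : 7 ≤ q) (hodd : Odd q) {b : ℤ → V} {x y : V}
    (hper : ∀ k, b (k + q) = b k)
    (hne : ∀ k l : ℤ, 0 < k - l → k - l < q → b k ≠ b l)
    (hadj : ∀ k l : ℤ, 2 ≤ k - l → k - l ≤ q - 2 → G.Adj (b k) (b l))
    (hnadj : ∀ k l : ℤ, k - l = 1 → ¬ G.Adj (b k) (b l))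
    (hxb : ∀ k, x ≠ b k) (hyb : ∀ k, y ≠ b k)
    (hxy : ¬ G.Adj x y) (hxyne : x ≠ y)
    (hxind : ∀ k : ℤ, G.Adj x (b k) ∨ G.Adj x (b (k + 1)))
    (hyind : ∀ k : ℤ, G.Adj y (b k) ∨ G.Adj y (b (k + 1)))
    (hx0 : ¬ G.Adj x (b 0)) (hy0 : ¬ G.Adj y (b 0)) : False := by
  by_cases hx2 : G.Adj x (b 2)
  · by_cases hy2 : G.Adj y (b 2)
    · -- banner (b 2, x, b 1, y, b 0)
      have hx1 : G.Adj x (b 1) := by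
        have := (hxind 0).resolve_left hx0; norm_num at this; exact this
      have hy1 : G.Adj y (b 1) := by
        have := (hyind 0).resolve_left hy0; norm_num at this; exact this
      exact hbf (banner_emb hx2.symm hx1 hy1.symm hy2.symm
        (hadj 2 0 (by norm_num) (by omega))
        (hnadj 2 1 (by norm_num)) hxy hx0 (hnadj 1 0 (by norm_num)) hy0
        (hne 2 1 (by norm_num) (by omega)) hxyne (hxb 0)
        (hne 1 0 (by norm_num) (by omega)) (hyb 0))
    · exact branch2 hbf hc5 hq hodd hper hne hadj hnadj hyb hxb
        (fun h => hxy h.symm) hxyne.symm hyind hxind hy0 hx0 hy2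
  · exact branch2 hbf hc5 hq hodd hper hne hadj hnadj hxb hyb
      hxy hxyne hxind hyind hx0 hy0 hx2

theorem stmt_17 {V : Type*} [Fintype V] (G : SimpleGraph V)
    (hbf : BannerFree G) (hc5 : C5Free G)
    (A : Set V) (hA : IsOddAntihole G A)
    (hno2 : ∀ t : Finset V, Gᶜ.IsNClique 3 t →
      ∀ a ∈ t, ∀ b ∈ t, a ∈ A → b ∈ A → a = b) :
    ∀ v ∈ A, ∀ t : Finset V, Gᶜ.IsNClique 3 t → v ∉ t := by
  classical
  obtain ⟨n, hn5, hnodd, ⟨φ⟩⟩ := hA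
  obtain ⟨m, rfl⟩ : ∃ m, n = m + 5 := ⟨n - 5, by omega⟩
  -- the index function into the antihole
  have hq0 : (0 : ℤ) < (m : ℤ) + 5 := by positivity
  have hfb : ∀ k : ℤ, (k % ((m : ℤ) + 5)).toNat < m + 5 := by
    intro k
    have h1 := Int.emod_nonneg k (by omega : ((m : ℤ) + 5) ≠ 0)
    have h2 := Int.emod_lt_of_pos k hq0
    omega
  set f : ℤ → Fin (m + 5) := fun k => ⟨(k % ((m : ℤ) + 5)).toNat, hfb k⟩ with hf
  set b : ℤ → V := fun k => ((φ (f k)) : V) with hb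
  have hbmem : ∀ k, b k ∈ A := fun k => (φ (f k)).2
  have hfval : ∀ k : ℤ, (((f k) : Fin (m + 5)).val : ℤ) = k % ((m : ℤ) + 5) := by
    intro k
    simp only [hf]
    rw [Int.toNat_of_nonneg (Int.emod_nonneg k (by omega : ((m : ℤ) + 5) ≠ 0))]
  have hfeq : ∀ k l : ℤ, f k = f l ↔ ((m : ℤ) + 5) ∣ (k - l) := by
    intro k l
    constructor
    · intro h
      have h1 : k % ((m : ℤ) + 5) = l % ((m : ℤ) + 5) := by
        rw [← hfval k, ← hfval l, h]
      have h2 : k ≡ l [ZMOD ((m : ℤ) + 5)] := h1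
      have h3 := (Int.ModEq.dvd h2)
      rwa [show l - k = -(k - l) by ring, dvd_neg] at h3
    · intro h
      have h2 : k ≡ l [ZMOD ((m : ℤ) + 5)] := by
        apply Int.ModEq.symm
        apply Int.modEq_iff_dvd.mpr
        exact h
      have h1 : k % ((m : ℤ) + 5) = l % ((m : ℤ) + 5) := h2
      have h3 : (((f k) : Fin (m + 5)).val : ℤ) = (((f l) : Fin (m + 5)).val : ℤ) := by
        rw [hfval, hfval, h1]
      exact Fin.ext (by exact_mod_cast h3)
  have hfadd : ∀ k : ℤ, f (k + 1) = f k + 1 := by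
    intro k
    apply Fin.ext
    rw [Fin.val_add_one]
    by_cases hc : (f k : Fin (m + 5)) = Fin.last (m + 4)
    · rw [if_pos hc]
      have hcv : (((f k) : Fin (m + 5)).val : ℤ) = (m : ℤ) + 4 := by
        rw [hc]
        simp only [Fin.last]
        push_cast
        ring
      have h1 : k % ((m : ℤ) + 5) = (m : ℤ) + 4 := by rw [← hfval k]; exact hcv
      have h2 : (k + 1) % ((m : ℤ) + 5) = 0 := by
        have : (k + 1) ≡ ((m : ℤ) + 5) [ZMOD ((m : ℤ) + 5)] := by
          apply Int.ModEq.symm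
          apply Int.modEq_iff_dvd.mpr
          have h4 : ((m : ℤ) + 5) ∣ (k - ((m : ℤ) + 4)) := by
            apply Int.dvd_of_emod_eq_zero
            have e : ((m:ℤ)+4) % ((m:ℤ)+5) = (m:ℤ)+4 :=
              Int.emod_eq_of_lt (by positivity) (by omega)
            rw [Int.sub_emod, h1, e, sub_self, Int.zero_emod]
          have : k + 1 - ((m : ℤ) + 5) = k - ((m : ℤ) + 4) := by ring
          rw [this]; exact h4
        have h5 : (k + 1) % ((m : ℤ) + 5) = ((m : ℤ) + 5) % ((m : ℤ) + 5) := this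
        rwa [Int.emod_self] at h5
      have h6 := hfval (k + 1)
      rw [h2] at h6
      omega
    · rw [if_neg hc]
      have hcv : (((f k) : Fin (m + 5)).val) ≠ m + 4 := by
        intro hcc
        exact hc (Fin.ext (by simpa [Fin.last] using hcc))
      have hlt : (((f k) : Fin (m + 5)).val) < m + 4 := by
        have := ((f k) : Fin (m + 5)).isLt
        omega
      have h1 : k % ((m : ℤ) + 5) = (((f k) : Fin (m + 5)).val : ℤ) := (hfval k).symm
      have h2 : (k + 1) % ((m : ℤ) + 5) = (((f k) : Fin (m + 5)).val : ℤ) + 1 := by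
        have h3 : (k + 1) ≡ ((((f k) : Fin (m + 5)).val : ℤ) + 1) [ZMOD ((m : ℤ) + 5)] := by
          apply Int.ModEq.add_right 1
          show k % _ = _ % _
          rw [h1]
          exact (Int.emod_eq_of_lt (by positivity)
            (by exact_mod_cast ((f k) : Fin (m + 5)).isLt)).symm
        have h4 : ((((f k) : Fin (m + 5)).val : ℤ) + 1) % ((m : ℤ) + 5)
            = (((f k) : Fin (m + 5)).val : ℤ) + 1 := by
          apply Int.emod_eq_of_lt
          · positivity
          · push_cast; omega
        have h5 : (k + 1) % ((m : ℤ) + 5) = ((((f k) : Fin (m + 5)).val : ℤ) + 1) % ((m : ℤ) + 5) := h3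
        rw [h5, h4]
      have h6 := hfval (k + 1)
      rw [h2] at h6
      omega
  have hGadj : ∀ k l : ℤ, G.Adj (b k) (b l) ↔
      ((f k : Fin (m + 5)) ≠ f l ∧ ¬((f k : Fin (m+5)) - f l = 1 ∨ (f l : Fin (m+5)) - f k = 1)) := by
    intro k l
    have h1 : G.Adj (b k) (b l) ↔ (G.induce A).Adj (φ (f k)) (φ (f l)) := Iff.rfl
    rw [h1, SimpleGraph.Iso.map_adj_iff, SimpleGraph.compl_adj, SimpleGraph.cycleGraph_adj]
  have hsub : ∀ k l : ℤ, ((f k : Fin (m+5)) - f l = 1) ↔ ((m : ℤ) + 5) ∣ (k - l - 1) := by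
    intro k l
    rw [sub_eq_iff_eq_add', ← hfadd l, hfeq]
    rw [show k - (l + 1) = k - l - 1 by ring]
  have hkey : ∀ k l : ℤ, G.Adj (b k) (b l) ↔
      ¬(((m : ℤ) + 5) ∣ (k - l) ∨ ((m : ℤ) + 5) ∣ (k - l - 1) ∨ ((m : ℤ) + 5) ∣ (k - l + 1)) := by
    intro k l
    rw [hGadj, ne_eq, hfeq, hsub, hsub]
    rw [show l - k - 1 = -(k - l + 1) by ring, dvd_neg]
    tauto
  have hdvd : ∀ z : ℤ, ((m : ℤ) + 5) ∣ z → z ≠ 0 → ((m : ℤ) + 5) ≤ |z| :=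
    fun z h hz => Int.le_of_dvd (abs_pos.mpr hz) ((dvd_abs _ _).mpr h)
  -- b-level graph facts
  have hadj_b : ∀ k l : ℤ, 2 ≤ k - l → k - l ≤ ((m : ℤ) + 5) - 2 → G.Adj (b k) (b l) := by
    intro k l h1 h2
    rw [hkey]
    rintro (h | h | h)
    · have h3 := hdvd _ h (by omega)
      rw [abs_of_nonneg (by omega)] at h3; omega
    · have h3 := hdvd _ h (by omega)
      rw [abs_of_nonneg (by omega)] at h3; omega
    · have h3 := hdvd _ h (by omega)
      rw [abs_of_nonneg (by omega)] at h3; omega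
  have hnadj_b : ∀ k l : ℤ, ((m : ℤ) + 5) ∣ (k - l - 1) → ¬ G.Adj (b k) (b l) :=
    fun k l h hA' => ((hkey k l).mp hA') (Or.inr (Or.inl h))
  have hne_b : ∀ k l : ℤ, 0 < k - l → k - l < ((m : ℤ) + 5) → b k ≠ b l := by
    intro k l h1 h2 he
    have hfe : (f k : Fin (m+5)) = f l := φ.toEquiv.injective (Subtype.coe_injective he)
    rw [hfeq] at hfe
    have h3 := hdvd _ hfe (by omega)
    rw [abs_of_nonneg (by omega)] at h3; omega
  have hper_b : ∀ k : ℤ, b (k + ((m : ℤ) + 5)) = b k := by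
    intro k
    have hfe : f (k + ((m : ℤ) + 5)) = f k := (hfeq _ _).mpr ⟨1, by ring⟩
    show ((φ (f (k + ((m : ℤ) + 5)))) : V) = ((φ (f k)) : V)
    rw [hfe]
  -- now the main argument
  intro v hv t hct hvt
  -- extract the other two vertices of the co-triangle
  have hcard : t.card = 3 := hct.2
  have hclq := hct.1
  have hce : (t.erase v).card = 2 := by rw [Finset.card_erase_of_mem hvt, hcard]
  obtain ⟨x, y, hxyne, hexy⟩ := Finset.card_eq_two.mp hce
  have hxe : x ∈ t.erase v := by rw [hexy]; simp
  have hye : y ∈ t.erase v := by rw [hexy]; simp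
  have hxt : x ∈ t := Finset.mem_of_mem_erase hxe
  have hyt : y ∈ t := Finset.mem_of_mem_erase hye
  have hxv : x ≠ v := Finset.ne_of_mem_erase hxe
  have hyv : y ≠ v := Finset.ne_of_mem_erase hye
  have nd : ∀ a ∈ t, ∀ c ∈ t, a ≠ c → ¬G.Adj a c := by
    intro a ha c hc hac
    have := hclq (Finset.mem_coe.mpr ha) (Finset.mem_coe.mpr hc) hac
    rw [SimpleGraph.compl_adj] at this
    exact this.2
  have hvx : ¬ G.Adj v x := nd v hvt x hxt (Ne.symm hxv)
  have hvy : ¬ G.Adj v y := nd v hvt y hyt (Ne.symm hyv)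
  have hxy : ¬ G.Adj x y := nd x hxt y hyt hxyne
  have hxA : x ∉ A := fun hxA => hxv (hno2 t hct x hxt v hvt hxA hv)
  have hyA : y ∉ A := fun hyA => hyv (hno2 t hct y hyt v hvt hyA hv)
  have hxb : ∀ k, x ≠ b k := fun k he => hxA (he ▸ hbmem k)
  have hyb : ∀ k, y ≠ b k := fun k he => hyA (he ▸ hbmem k)
  -- v is b k0
  set u : Fin (m + 5) := φ.symm ⟨v, hv⟩ with hu
  have hbu : b ((u.val : ℤ)) = v := by
    have hfu : f ((u.val : ℤ)) = u := by
      apply Fin.ext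
      have h1 := hfval ((u.val : ℤ))
      have h2 : ((u.val : ℤ)) % ((m : ℤ) + 5) = (u.val : ℤ) := by
        apply Int.emod_eq_of_lt
        · positivity
        · exact_mod_cast u.isLt
      rw [h2] at h1
      exact_mod_cast h1
    show ((φ (f ((u.val : ℤ)))) : V) = v
    rw [hfu, hu]
    exact congrArg Subtype.val (RelIso.apply_symm_apply φ ⟨v, hv⟩)
  -- independence of the non-neighbourhoods
  have hind : ∀ w : V, w ∉ A → w ≠ v →
      ∀ k : ℤ, G.Adj w (b k) ∨ G.Adj w (b (k + 1)) := by
    intro w hwA hwv k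
    by_contra hcon
    push_neg at hcon
    obtain ⟨h1, h2⟩ := hcon
    have hne1 : b k ≠ b (k + 1) := Ne.symm (hne_b (k+1) k (by omega) (by omega))
    have hwk : w ≠ b k := fun he => hwA (he ▸ hbmem k)
    have hwk1 : w ≠ b (k + 1) := fun he => hwA (he ▸ hbmem (k+1))
    have hnadj1 : ¬ G.Adj (b k) (b (k + 1)) :=
      fun h => hnadj_b (k+1) k (by simp) h.symm
    have htc := cotri hwk hwk1 hne1 h1 h2 hnadj1
    exact hne1 (hno2 _ htc (b k) (by simp) (b (k + 1)) (by simp) (hbmem k) (hbmem (k+1)))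
  have hxind := hind x hxA hxv
  have hyind := hind y hyA hyv
  -- shift so that v sits at index 0
  set B : ℤ → V := fun k => b ((u.val : ℤ) + k) with hB
  have hB0 : B 0 = v := by
    show b ((u.val : ℤ) + 0) = v
    rw [add_zero]; exact hbu
  have hx0 : ¬ G.Adj x (B 0) := by rw [hB0]; exact fun h => hvx h.symm
  have hy0 : ¬ G.Adj y (B 0) := by rw [hB0]; exact fun h => hvy h.symm
  -- dispatch on n = 5 or n ≥ 7
  by_cases hm : m = 0
  · subst hm
    apply hc5
    refine c5_emb (v0 := b 0) (v1 := b 2) (v2 := b 4) (v3 := b 1) (v4 := b 3)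
      ((hadj_b 2 0 (by norm_num) (by norm_num)).symm)
      ((hadj_b 4 2 (by norm_num) (by norm_num)).symm)
      (hadj_b 4 1 (by norm_num) (by norm_num))
      ((hadj_b 3 1 (by norm_num) (by norm_num)).symm)
      ((hadj_b 3 0 (by norm_num) (by norm_num)).symm)
      (hnadj_b 0 4 (by norm_num))
      (fun h => hnadj_b 1 0 (by norm_num) h.symm)
      (hnadj_b 2 1 (by norm_num))
      (fun h => hnadj_b 3 2 (by norm_num) h.symm)
      (hnadj_b 4 3 (by norm_num))
      (Ne.symm (hne_b 4 0 (by norm_num) (by norm_num)))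
      (Ne.symm (hne_b 1 0 (by norm_num) (by norm_num)))
      (hne_b 2 1 (by norm_num) (by norm_num))
      (Ne.symm (hne_b 3 2 (by norm_num) (by norm_num)))
      (hne_b 4 3 (by norm_num) (by norm_num))
  · have hq7 : (7 : ℤ) ≤ (m : ℤ) + 5 := by
      obtain ⟨r, hr⟩ := hnodd
      omega
    have hoddz : Odd ((m : ℤ) + 5) := by
      obtain ⟨r, hr⟩ := hnodd
      exact ⟨(r : ℤ), by omega⟩
    exact core7 hbf hc5 hq7 hoddz
      (b := B) (x := x) (y := y)
      (fun k => by
        show b ((u.val : ℤ) + (k + ((m:ℤ)+5))) = b ((u.val : ℤ) + k)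
        rw [show (u.val : ℤ) + (k + ((m:ℤ)+5)) = ((u.val : ℤ) + k) + ((m:ℤ)+5) by ring]
        exact hper_b _)
      (fun k l h1 h2 => hne_b ((u.val : ℤ) + k) ((u.val : ℤ) + l) (by omega) (by omega))
      (fun k l h1 h2 => hadj_b ((u.val : ℤ) + k) ((u.val : ℤ) + l) (by omega) (by omega))
      (fun k l h1 => hnadj_b ((u.val : ℤ) + k) ((u.val : ℤ) + l) (by
        rw [show ((u.val : ℤ) + k) - ((u.val : ℤ) + l) - 1 = k - l - 1 by ring]
        rw [show k - l - 1 = 0 by omega]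
        exact dvd_zero _))
      (fun k => hxb _) (fun k => hyb _) hxy hxyne
      (fun k => by
        have := hxind ((u.val : ℤ) + k)
        rwa [show ((u.val : ℤ) + k) + 1 = (u.val : ℤ) + (k + 1) by ring] at this)
      (fun k => by
        have := hyind ((u.val : ℤ) + k)
        rwa [show ((u.val : ℤ) + k) + 1 = (u.val : ℤ) + (k + 1) by ring] at this)
      hx0 hy0
end
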